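/- arXiv:2006.11772 — 6 statements merged into one kernel-verified Lean document; each statement's English description precedes it below -/
import Mathlib

section
/- For every positive integer N there exists a connected simple graph G such that dim(G) − edim(G) ≥ N; that is, the difference dim(G) − edim(G) can be arbitrarily large. -/
/-- `S` is a metric generator of `G`: every pair of distinct vertices is
identified by some vertex of `S` via distances. -/
def IsMetricGenerator {V : Type*} (G : SimpleGraph V) (S : Set V) : Prop :=
  ∀ u v : V, u ≠ v → ∃ z ∈ S, G.dist u z ≠ G.dist v z

/-- The metric dimension of `G`: the least cardinality of a (finite) metric generator. -/
noncomputable def metricDim {V : Type*} (G : SimpleGraph V) : ℕ :=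
  sInf {n | ∃ S : Set V, S.Finite ∧ IsMetricGenerator G S ∧ S.ncard = n}

/-- Distance from an edge (unordered pair) to a vertex:
`d(uv, z) = min (d u z) (d v z)`. -/
noncomputable def edgeDist {V : Type*} (G : SimpleGraph V) (e : Sym2 V) (z : V) : ℕ :=
  Sym2.lift ⟨fun u v => min (G.dist u z) (G.dist v z), fun u v => by simp [min_comm]⟩ e

/-- `S` is an edge metric generator of `G`: every pair of distinct edges is
distinguished by some vertex of `S`. -/
def IsEdgeMetricGenerator {V : Type*} (G : SimpleGraph V) (S : Set V) : Prop :=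
  ∀ e ∈ G.edgeSet, ∀ f ∈ G.edgeSet, e ≠ f → ∃ z ∈ S, edgeDist G e z ≠ edgeDist G f z

/-- The edge metric dimension of `G`: the least cardinality of a (finite) edge
metric generator. -/
noncomputable def edgeMetricDim {V : Type*} (G : SimpleGraph V) : ℕ :=
  sInf {n | ∃ S : Set V, S.Finite ∧ IsEdgeMetricGenerator G S ∧ S.ncard = n}

open SimpleGraph

namespace ChainProof
abbrev Vtx (M : ℕ) : Type := (Fin M × Fin 7) ⊕ Bool
def gp (a b : ℕ) : Prop :=
  (a = 0 ∧ b = 1) ∨ (a = 0 ∧ b = 3) ∨ (a = 6 ∧ b = 1) ∨ (a = 6 ∧ b = 2) ∨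
  (a = 1 ∧ b = 5) ∨ (a = 2 ∧ b = 4) ∨ (a = 3 ∧ b = 4)
instance gpDec : ∀ a b, Decidable (gp a b) := fun a b => by unfold gp; exact inferInstance

def bRel (M : ℕ) : Vtx M → Vtx M → Prop
  | Sum.inr false, Sum.inl (i, j) => i.val = 0 ∧ j.val = 0
  | Sum.inl (i, j), Sum.inr true => i.val = M - 1 ∧ j.val = 6
  | Sum.inl (i, j), Sum.inl (i', j') =>
      (i = i' ∧ gp j.val j'.val) ∨ (i'.val = i.val + 1 ∧ j.val = 6 ∧ j'.val = 0)
  | _, _ => False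
def graph (M : ℕ) : SimpleGraph (Vtx M) where
  Adj x y := bRel M x y ∨ bRel M y x
  symm := by constructor; intro x y h; exact h.symm
  loopless := by
    constructor
    intro x h
    rcases x with ⟨i, j⟩ | b
    · rcases h with h | h <;>
      · simp only [bRel, gp] at h
        rcases h with ⟨-, h⟩ | h
        · omega
        · omega
    · cases b <;> rcases h with h | h <;> exact h
def cL : ℕ → ℕ | 0 => 1 | 1 => 2 | 2 => 4 | 3 => 2 | _ => 3
def cR : ℕ → ℕ | 0 => 3 | 1 => 2 | 2 => 2 | 3 => 4 | 4 => 3 | 5 => 3 | _ => 1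
def fL (M : ℕ) : Vtx M → ℕ
  | Sum.inr false => 0
  | Sum.inr true => 3 * M + 1
  | Sum.inl (i, j) => 3 * i.val + cL j.val
def fR (M : ℕ) : Vtx M → ℕ
  | Sum.inr true => 0
  | Sum.inr false => 3 * M + 1
  | Sum.inl (i, j) => 3 * (M - 1 - i.val) + cR j.val

lemma fR_lip {M : ℕ} : ∀ u v : Vtx M, (graph M).Adj u v → fR M u ≤ fR M v + 1 := by
  have hcase : ∀ u v : Vtx M, bRel M u v → fR M u ≤ fR M v + 1 ∧ fR M v ≤ fR M u + 1 := by
    intro u v h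
    rcases u with ⟨i, j⟩ | b
    · rcases v with ⟨i', j'⟩ | b'
      · simp only [bRel] at h
        rcases h with ⟨rfl, hg⟩ | ⟨h1, h2, h3⟩
        · simp only [fR]
          rcases hg with ⟨h1,h2⟩|⟨h1,h2⟩|⟨h1,h2⟩|⟨h1,h2⟩|⟨h1,h2⟩|⟨h1,h2⟩|⟨h1,h2⟩ <;>
            rw [h1, h2] <;> simp [cR] <;> omega
        · simp only [fR]; rw [h2, h3]
          have := i'.isLt
          simp [cR]; omega
      · cases b'
        · exact absurd h (by simp [bRel])
        · simp only [bRel] at h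
          simp only [fR]; rw [h.2]
          have h1 : i.val = M - 1 := h.1
          have : (1:ℕ) ≤ M := by have := i.isLt; omega
          simp [cR]; omega
    · cases b
      · rcases v with ⟨i', j'⟩ | b'
        · simp only [bRel] at h
          simp only [fR]; rw [h.1, h.2]
          have : (1:ℕ) ≤ M := by have := i'.isLt; omega
          simp [cR]; omega
        · cases b' <;> exact absurd h (by simp [bRel])
      · exact absurd h (by rcases v with ⟨i', j'⟩ | b' <;> first | simp [bRel] | (cases b' <;> simp [bRel]))
  intro u v h
  rcases h with h | h
  · exact (hcase u v h).1
  · exact (hcase v u h).2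

lemma fL_desc {M : ℕ} (hM : 1 ≤ M) :
    ∀ v : Vtx M, v ≠ Sum.inr false → ∃ w, (graph M).Adj v w ∧ fL M w + 1 = fL M v := by
  intro v hv
  rcases v with ⟨i, j⟩ | b
  case inr => cases b
              case false => exact absurd rfl hv
              case true =>
                refine ⟨Sum.inl (⟨M - 1, by omega⟩, (6:Fin 7)), Or.inr ⟨rfl, rfl⟩, ?_⟩
                show 3 * (M-1) + 3 + 1 = 3 * M + 1
                omega
  have hj := j.isLt
  have hi := i.isLt
  by_cases h0 : j.val = 0
  case pos =>
    have : j = (0 : Fin 7) := Fin.ext (by simpa using h0)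
    subst this
    by_cases hiz : i.val = 0
    case pos =>
      refine ⟨Sum.inr false, Or.inr ⟨hiz, rfl⟩, ?_⟩
      show 0 + 1 = 3 * i.val + 1
      omega
    case neg =>
      refine ⟨Sum.inl (⟨i.val - 1, by omega⟩, (6:Fin 7)), Or.inr (Or.inr ⟨by show i.val = i.val - 1 + 1; omega, rfl, rfl⟩), ?_⟩
      show 3 * (i.val - 1) + 3 + 1 = 3 * i.val + 1
      omega
  by_cases h1 : j.val = 1
  case pos =>
    have : j = (1 : Fin 7) := Fin.ext (by simpa using h1)
    subst this
    refine ⟨Sum.inl (i, (0:Fin 7)), Or.inr (Or.inl ⟨rfl, by decide⟩), ?_⟩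
    show 3 * i.val + 1 + 1 = 3 * i.val + 2
    omega
  by_cases h2 : j.val = 2
  case pos =>
    have : j = (2 : Fin 7) := Fin.ext (by simpa using h2)
    subst this
    refine ⟨Sum.inl (i, (4:Fin 7)), Or.inl (Or.inl ⟨rfl, by decide⟩), ?_⟩
    show 3 * i.val + 3 + 1 = 3 * i.val + 4
    omega
  by_cases h3 : j.val = 3
  case pos =>
    have : j = (3 : Fin 7) := Fin.ext (by simpa using h3)
    subst this
    refine ⟨Sum.inl (i, (0:Fin 7)), Or.inr (Or.inl ⟨rfl, by decide⟩), ?_⟩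
    show 3 * i.val + 1 + 1 = 3 * i.val + 2
    omega
  by_cases h4 : j.val = 4
  case pos =>
    have : j = (4 : Fin 7) := Fin.ext (by simpa using h4)
    subst this
    refine ⟨Sum.inl (i, (3:Fin 7)), Or.inr (Or.inl ⟨rfl, by decide⟩), ?_⟩
    show 3 * i.val + 2 + 1 = 3 * i.val + 3
    omega
  by_cases h5 : j.val = 5
  case pos =>
    have : j = (5 : Fin 7) := Fin.ext (by simpa using h5)
    subst this
    refine ⟨Sum.inl (i, (1:Fin 7)), Or.inr (Or.inl ⟨rfl, by decide⟩), ?_⟩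
    show 3 * i.val + 2 + 1 = 3 * i.val + 3
    omega
  have : j = (6 : Fin 7) := Fin.ext (by omega)
  subst this
  refine ⟨Sum.inl (i, (1:Fin 7)), Or.inl (Or.inl ⟨rfl, by decide⟩), ?_⟩
  show 3 * i.val + 2 + 1 = 3 * i.val + 3
  omega

lemma fR_desc {M : ℕ} (hM : 1 ≤ M) :
    ∀ v : Vtx M, v ≠ Sum.inr true → ∃ w, (graph M).Adj v w ∧ fR M w + 1 = fR M v := by
  intro v hv
  rcases v with ⟨i, j⟩ | b
  case inr => cases b
              case true => exact absurd rfl hv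
              case false =>
                refine ⟨Sum.inl (⟨0, by omega⟩, (0:Fin 7)), Or.inl ⟨rfl, rfl⟩, ?_⟩
                show 3 * (M - 1 - 0) + 3 + 1 = 3 * M + 1
                omega
  have hj := j.isLt
  have hi := i.isLt
  by_cases h6 : j.val = 6
  case pos =>
    have : j = (6 : Fin 7) := Fin.ext (by simpa using h6)
    subst this
    by_cases hiM : i.val = M - 1
    case pos =>
      refine ⟨Sum.inr true, Or.inl ⟨hiM, rfl⟩, ?_⟩
      show 0 + 1 = 3 * (M - 1 - i.val) + 1
      omega
    case neg =>
      refine ⟨Sum.inl (⟨i.val + 1, by omega⟩, (0:Fin 7)), Or.inl (Or.inr ⟨rfl, rfl, rfl⟩), ?_⟩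
      show 3 * (M - 1 - (i.val + 1)) + 3 + 1 = 3 * (M - 1 - i.val) + 1
      omega
  by_cases h0 : j.val = 0
  case pos =>
    have : j = (0 : Fin 7) := Fin.ext (by simpa using h0)
    subst this
    refine ⟨Sum.inl (i, (1:Fin 7)), Or.inl (Or.inl ⟨rfl, by decide⟩), ?_⟩
    show 3 * (M - 1 - i.val) + 2 + 1 = 3 * (M - 1 - i.val) + 3
    omega
  by_cases h1 : j.val = 1
  case pos =>
    have : j = (1 : Fin 7) := Fin.ext (by simpa using h1)
    subst this
    refine ⟨Sum.inl (i, (6:Fin 7)), Or.inr (Or.inl ⟨rfl, by decide⟩), ?_⟩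
    show 3 * (M - 1 - i.val) + 1 + 1 = 3 * (M - 1 - i.val) + 2
    omega
  by_cases h2 : j.val = 2
  case pos =>
    have : j = (2 : Fin 7) := Fin.ext (by simpa using h2)
    subst this
    refine ⟨Sum.inl (i, (6:Fin 7)), Or.inr (Or.inl ⟨rfl, by decide⟩), ?_⟩
    show 3 * (M - 1 - i.val) + 1 + 1 = 3 * (M - 1 - i.val) + 2
    omega
  by_cases h3 : j.val = 3
  case pos =>
    have : j = (3 : Fin 7) := Fin.ext (by simpa using h3)
    subst this
    refine ⟨Sum.inl (i, (0:Fin 7)), Or.inr (Or.inl ⟨rfl, by decide⟩), ?_⟩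
    show 3 * (M - 1 - i.val) + 3 + 1 = 3 * (M - 1 - i.val) + 4
    omega
  by_cases h4 : j.val = 4
  case pos =>
    have : j = (4 : Fin 7) := Fin.ext (by simpa using h4)
    subst this
    refine ⟨Sum.inl (i, (2:Fin 7)), Or.inr (Or.inl ⟨rfl, by decide⟩), ?_⟩
    show 3 * (M - 1 - i.val) + 2 + 1 = 3 * (M - 1 - i.val) + 3
    omega
  have : j = (5 : Fin 7) := Fin.ext (by omega)
  subst this
  refine ⟨Sum.inl (i, (1:Fin 7)), Or.inr (Or.inl ⟨rfl, by decide⟩), ?_⟩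
  show 3 * (M - 1 - i.val) + 2 + 1 = 3 * (M - 1 - i.val) + 3
  omega

lemma fL_lip {M : ℕ} : ∀ u v : Vtx M, (graph M).Adj u v → fL M u ≤ fL M v + 1 := by
  have hgad : ∀ (i : Fin M) (j j' : Fin 7), gp j.val j'.val →
      fL M (Sum.inl (i, j)) ≤ fL M (Sum.inl (i, j')) + 1 ∧
      fL M (Sum.inl (i, j')) ≤ fL M (Sum.inl (i, j)) + 1 := by
    intro i j j' h
    simp only [fL]
    rcases h with ⟨h1,h2⟩|⟨h1,h2⟩|⟨h1,h2⟩|⟨h1,h2⟩|⟨h1,h2⟩|⟨h1,h2⟩|⟨h1,h2⟩ <;>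
      rw [h1, h2] <;> simp [cL] <;> omega
  have hcase : ∀ u v : Vtx M, bRel M u v → fL M u ≤ fL M v + 1 ∧ fL M v ≤ fL M u + 1 := by
    intro u v h
    rcases u with ⟨i, j⟩ | b
    · rcases v with ⟨i', j'⟩ | b'
      · simp only [bRel] at h
        rcases h with ⟨rfl, hg⟩ | ⟨h1, h2, h3⟩
        · exact ⟨(hgad i j j' hg).1, (hgad i j j' hg).2⟩
        · simp only [fL]; rw [h2, h3]; simp [cL]; omega
      · cases b'
        · exact absurd h (by simp [bRel])
        · simp only [bRel] at h
          simp only [fL]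
          rw [h.2]
          have : i.val = M - 1 := h.1
          have : (1:ℕ) ≤ M := by have := i.isLt; omega
          simp [cL]; omega
    · cases b
      · rcases v with ⟨i', j'⟩ | b'
        · simp only [bRel] at h
          simp only [fL]; rw [h.1, h.2]; simp [cL]
        · cases b' <;> exact absurd h (by simp [bRel])
      · exact absurd h (by rcases v with ⟨i', j'⟩ | b' <;> first | simp [bRel] | (cases b' <;> simp [bRel]))
  intro u v h
  rcases h with h | h
  · exact (hcase u v h).1
  · exact (hcase v u h).2


-- general lemmas
lemma le_of_walk {V : Type*} {G : SimpleGraph V} (f : V → ℕ)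
    (hlip : ∀ u v, G.Adj u v → f u ≤ f v + 1) :
    ∀ {u v : V} (W : G.Walk u v), f u ≤ f v + W.length := by
  intro u v W
  induction W with
  | nil => simp
  | @cons a b c h p ih =>
      have := hlip a b h
      simp only [SimpleGraph.Walk.length_cons]
      omega

lemma potential_dist {V : Type*} {G : SimpleGraph V} (f : V → ℕ) (r : V) (hr : f r = 0)
    (hlip : ∀ u v, G.Adj u v → f u ≤ f v + 1)
    (hdesc : ∀ v, v ≠ r → ∃ w, G.Adj v w ∧ f w + 1 = f v) :
    ∀ v, G.Reachable v r ∧ G.dist v r = f v := by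
  have key : ∀ n (v : V), f v ≤ n → ∃ W : G.Walk v r, W.length ≤ f v := by
    intro n
    induction n with
    | zero =>
        intro v hv
        by_cases h : v = r
        · subst h; exact ⟨SimpleGraph.Walk.nil, by simp⟩
        · obtain ⟨w, -, hw2⟩ := hdesc v h; omega
    | succ n ih =>
        intro v hv
        by_cases h : v = r
        · subst h; exact ⟨SimpleGraph.Walk.nil, by simp⟩
        · obtain ⟨w, hadj, hw⟩ := hdesc v h
          obtain ⟨W, hW⟩ := ih w (by omega)
          exact ⟨SimpleGraph.Walk.cons hadj W, by simp; omega⟩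
  intro v
  obtain ⟨W, hW⟩ := key (f v) v le_rfl
  have hreach : G.Reachable v r := ⟨W⟩
  refine ⟨hreach, le_antisymm ?_ ?_⟩
  · exact le_trans (SimpleGraph.dist_le W) hW
  · obtain ⟨W', hW'⟩ := hreach.exists_walk_length_eq_dist
    have := le_of_walk f hlip W'
    omega

lemma walk_boundary {V : Type*} {G : SimpleGraph V} (I : Set V) (p q : V)
    (hI : ∀ u ∈ I, ∀ w, G.Adj u w → w ∈ I ∨ w = p ∨ w = q) :
    ∀ {x z : V} (W : G.Walk x z), x ∈ I → z ∉ I → p ∈ W.support ∨ q ∈ W.support := by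
  intro x z W
  induction W with
  | nil => intro h1 h2; exact absurd h1 h2
  | @cons a b c h W ih =>
      intro ha hc
      rcases hI a ha b h with hb | rfl | rfl
      · rcases ih hb hc with h' | h'
        · exact Or.inl (by simp [SimpleGraph.Walk.support_cons, h'])
        · exact Or.inr (by simp [SimpleGraph.Walk.support_cons, h'])
      · exact Or.inl (by simp [SimpleGraph.Walk.support_cons])
      · exact Or.inr (by simp [SimpleGraph.Walk.support_cons])

lemma dist_eq_boundary {V : Type*} [DecidableEq V] {G : SimpleGraph V} (hc : G.Connected)
    (I : Set V) (p q : V)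
    (hI : ∀ u ∈ I, ∀ w, G.Adj u w → w ∈ I ∨ w = p ∨ w = q)
    {x z : V} (hx : x ∈ I) (hz : z ∉ I)
    (hxp : G.dist x p = 2) (hxq : G.dist x q = 2) :
    G.dist x z = 2 + min (G.dist p z) (G.dist q z) := by
  refine le_antisymm ?_ ?_
  · rcases le_or_gt (G.dist p z) (G.dist q z) with h | h
    · calc G.dist x z ≤ G.dist x p + G.dist p z := hc.dist_triangle
        _ = 2 + min (G.dist p z) (G.dist q z) := by omega
    · calc G.dist x z ≤ G.dist x q + G.dist q z := hc.dist_triangle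
        _ = 2 + min (G.dist p z) (G.dist q z) := by omega
  · obtain ⟨W, hW⟩ := (hc x z).exists_walk_length_eq_dist
    have hsplit : ∀ b, b ∈ W.support → G.dist x b + G.dist b z ≤ W.length := by
      intro b hb
      have hspec := W.take_spec hb
      have : (W.takeUntil b hb).length + (W.dropUntil b hb).length = W.length := by
        rw [← SimpleGraph.Walk.length_append, hspec]
      have h1 := SimpleGraph.dist_le (W.takeUntil b hb)
      have h2 := SimpleGraph.dist_le (W.dropUntil b hb)
      omega
    rcases walk_boundary I p q hI W hx hz with hb | hb
    · have := hsplit p hb; omega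
    · have := hsplit q hb; omega

-- now instantiate
variable {M : ℕ}

lemma distL (hM : 1 ≤ M) (v : Vtx M) : (graph M).dist v (Sum.inr false) = fL M v :=
  (potential_dist (fL M) (Sum.inr false) rfl fL_lip (fL_desc hM) v).2

lemma distR (hM : 1 ≤ M) (v : Vtx M) : (graph M).dist v (Sum.inr true) = fR M v :=
  (potential_dist (fR M) (Sum.inr true) rfl fR_lip (fR_desc hM) v).2

lemma connected (hM : 1 ≤ M) : (graph M).Connected := by
  have h := fun v => (potential_dist (fL M) (Sum.inr false) rfl fL_lip (fL_desc hM) v).1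
  have : Nonempty (Vtx M) := ⟨Sum.inr false⟩
  constructor
  intro u v
  exact (h u).trans (h v).symm

def pV (M : ℕ) (i : Fin M) : Vtx M := Sum.inl (i, (0:Fin 7))
def qV (M : ℕ) (i : Fin M) : Vtx M := Sum.inl (i, (6:Fin 7))
def Iset (M : ℕ) (i : Fin M) : Set (Vtx M) :=
  {v | ∃ j : Fin 7, 1 ≤ j.val ∧ j.val ≤ 5 ∧ v = Sum.inl (i, j)}

lemma hI (i : Fin M) : ∀ u ∈ Iset M i, ∀ w, (graph M).Adj u w →
    w ∈ Iset M i ∨ w = pV M i ∨ w = qV M i := by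
  rintro u ⟨j, hj1, hj5, rfl⟩ w hadj
  rcases hadj with h | h
  · -- bRel (inl (i,j)) w
    rcases w with ⟨i', j'⟩ | b
    · rcases h with ⟨rfl, hgp⟩ | ⟨-, h6, -⟩
      · left
        refine ⟨j', ?_, ?_, rfl⟩ <;> (simp only [gp] at hgp; omega)
      · omega
    · cases b
      · exact absurd h (by simp [bRel])
      · simp only [bRel] at h; omega
  · -- bRel w (inl (i,j))
    rcases w with ⟨i', j'⟩ | b
    · rcases h with ⟨rfl, hgp⟩ | ⟨-, -, h0⟩
      · simp only [gp] at hgp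
        rcases hgp with ⟨h1,h2⟩|⟨h1,h2⟩|⟨h1,h2⟩|⟨h1,h2⟩|⟨h1,h2⟩|⟨h1,h2⟩|⟨h1,h2⟩
        · right; left; unfold pV; congr 1; exact congrArg _ (Fin.ext h1)
        · right; left; unfold pV; congr 1; exact congrArg _ (Fin.ext h1)
        · right; right; unfold qV; congr 1; exact congrArg _ (Fin.ext h1)
        · right; right; unfold qV; congr 1; exact congrArg _ (Fin.ext h1)
        · left; exact ⟨j', by omega, by omega, rfl⟩
        · left; exact ⟨j', by omega, by omega, rfl⟩
        · left; exact ⟨j', by omega, by omega, rfl⟩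
      · omega
    · cases b
      · simp only [bRel] at h; omega
      · exact absurd h (by simp [bRel])

lemma dist_eq_two {V : Type*} {G : SimpleGraph V} (hc : G.Connected) {x y : V}
    (hne : x ≠ y) (hnadj : ¬ G.Adj x y) (W : G.Walk x y) (hW : W.length = 2) :
    G.dist x y = 2 := by
  have h1 : G.dist x y ≤ 2 := hW ▸ SimpleGraph.dist_le W
  have h2 : G.dist x y ≠ 0 := fun h => hne (hc.dist_eq_zero_iff.mp h)
  have h3 : G.dist x y ≠ 1 := fun h => hnadj (SimpleGraph.dist_eq_one_iff_adj.mp h)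
  omega

lemma not_adj_gad (i : Fin M) (j j' : Fin 7) (h1 : ¬ gp j.val j'.val)
    (h2 : ¬ gp j'.val j.val) (h3 : ¬(j.val = 6 ∧ j'.val = 0)) (h4 : ¬(j'.val = 6 ∧ j.val = 0)) :
    ¬ (graph M).Adj (Sum.inl (i,j)) (Sum.inl (i,j')) := by
  intro h
  rcases h with (⟨-, h⟩ | ⟨h5, h6, h7⟩) | (⟨-, h⟩ | ⟨h5, h6, h7⟩)
  · exact h1 h
  · omega
  · exact h2 h
  · omega

lemma adj_gad (i : Fin M) (j j' : Fin 7) (h : gp j.val j'.val ∨ gp j'.val j.val) :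
    (graph M).Adj (Sum.inl (i,j)) (Sum.inl (i,j')) := by
  rcases h with h | h
  · exact Or.inl (Or.inl ⟨rfl, h⟩)
  · exact Or.inr (Or.inl ⟨rfl, h⟩)

lemma ne_gad (i : Fin M) (j j' : Fin 7) (h : j.val ≠ j'.val) :
    (Sum.inl (i,j) : Vtx M) ≠ Sum.inl (i,j') := by
  intro he
  have := (Prod.ext_iff.mp ((Sum.inl.injEq _ _).mp he)).2
  exact h (congrArg Fin.val this)

-- distances from v3=(i,4) and v4=(i,5) to p and q
lemma dist_4p (hM : 1 ≤ M) (i : Fin M) :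
    (graph M).dist (Sum.inl (i,(4:Fin 7))) (pV M i) = 2 := by
  refine dist_eq_two (connected hM) (ne_gad i _ _ (by decide))
    (not_adj_gad i _ _ (by decide) (by decide) (by decide) (by decide)) 
    (SimpleGraph.Walk.cons (adj_gad i (4:Fin 7) (3:Fin 7) (by decide))
      (SimpleGraph.Walk.cons (adj_gad i (3:Fin 7) (0:Fin 7) (by decide)) SimpleGraph.Walk.nil)) (by rfl)

lemma dist_4q (hM : 1 ≤ M) (i : Fin M) :
    (graph M).dist (Sum.inl (i,(4:Fin 7))) (qV M i) = 2 := by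
  refine dist_eq_two (connected hM) (ne_gad i _ _ (by decide))
    (not_adj_gad i _ _ (by decide) (by decide) (by decide) (by decide)) 
    (SimpleGraph.Walk.cons (adj_gad i (4:Fin 7) (2:Fin 7) (by decide))
      (SimpleGraph.Walk.cons (adj_gad i (2:Fin 7) (6:Fin 7) (by decide)) SimpleGraph.Walk.nil)) (by rfl)

lemma dist_5p (hM : 1 ≤ M) (i : Fin M) :
    (graph M).dist (Sum.inl (i,(5:Fin 7))) (pV M i) = 2 := by
  refine dist_eq_two (connected hM) (ne_gad i _ _ (by decide))
    (not_adj_gad i _ _ (by decide) (by decide) (by decide) (by decide)) 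
    (SimpleGraph.Walk.cons (adj_gad i (5:Fin 7) (1:Fin 7) (by decide))
      (SimpleGraph.Walk.cons (adj_gad i (1:Fin 7) (0:Fin 7) (by decide)) SimpleGraph.Walk.nil)) (by rfl)

lemma dist_5q (hM : 1 ≤ M) (i : Fin M) :
    (graph M).dist (Sum.inl (i,(5:Fin 7))) (qV M i) = 2 := by
  refine dist_eq_two (connected hM) (ne_gad i _ _ (by decide))
    (not_adj_gad i _ _ (by decide) (by decide) (by decide) (by decide)) 
    (SimpleGraph.Walk.cons (adj_gad i (5:Fin 7) (1:Fin 7) (by decide))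
      (SimpleGraph.Walk.cons (adj_gad i (1:Fin 7) (6:Fin 7) (by decide)) SimpleGraph.Walk.nil)) (by rfl)

lemma hard_pair (hM : 1 ≤ M) (i : Fin M) (z : Vtx M) (hz : z ∉ Iset M i) :
    (graph M).dist (Sum.inl (i,(4:Fin 7))) z = (graph M).dist (Sum.inl (i,(5:Fin 7))) z := by
  rw [dist_eq_boundary (connected hM) (Iset M i) (pV M i) (qV M i) (hI i)
      ⟨(4:Fin 7), by omega, by omega, rfl⟩ hz (dist_4p hM i) (dist_4q hM i),
    dist_eq_boundary (connected hM) (Iset M i) (pV M i) (qV M i) (hI i)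
      ⟨(5:Fin 7), by omega, by omega, rfl⟩ hz (dist_5p hM i) (dist_5q hM i)]

lemma metricDim_ge (hM : 1 ≤ M) : M ≤ metricDim (graph M) := by
  have hne : {n | ∃ S : Set (Vtx M), S.Finite ∧ IsMetricGenerator (graph M) S ∧ S.ncard = n}.Nonempty := by
    refine ⟨_, Set.univ, Set.finite_univ, ?_, rfl⟩
    intro u v huv
    refine ⟨u, trivial, ?_⟩
    rw [SimpleGraph.dist_self]
    have := (connected hM).pos_dist_of_ne (Ne.symm huv)
    omega
  obtain ⟨S, hfin, hgen, hcard⟩ := Nat.sInf_mem hne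
  rw [metricDim, ← hcard]
  have hch : ∀ i : Fin M, ∃ z, z ∈ S ∧ z ∈ Iset M i := by
    intro i
    obtain ⟨z, hzS, hzd⟩ := hgen (Sum.inl (i,(4:Fin 7))) (Sum.inl (i,(5:Fin 7))) (ne_gad i _ _ (by decide))
    refine ⟨z, hzS, ?_⟩
    by_contra hz
    exact hzd (hard_pair hM i z hz)
  choose f hfS hfI using hch
  have hinj : Function.Injective f := by
    intro a b hab
    obtain ⟨j1, -, -, h1⟩ := hfI a
    obtain ⟨j2, -, -, h2⟩ := hfI b
    rw [hab] at h1
    rw [h1] at h2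
    have := (Sum.inl.injEq _ _).mp h2
    exact (Prod.ext_iff.mp this).1
  have hsub : Set.range f ⊆ S := by rintro _ ⟨a, rfl⟩; exact hfS a
  have h1 : (Set.range f).ncard = M := by
    rw [← Set.image_univ, Set.ncard_image_of_injective _ hinj, Set.ncard_univ,
      Nat.card_eq_fintype_card, Fintype.card_fin]
  calc M = (Set.range f).ncard := h1.symm
    _ ≤ S.ncard := Set.ncard_le_ncard hsub hfin

def D (M : ℕ) (x y : Vtx M) (a b : ℕ) : Prop :=
  (∃ i : Fin M, i.val < M ∧ i.val = 0 ∧ x = Sum.inr false ∧ y = Sum.inl (i,(0:Fin 7)) ∧ a = 0 ∧ b = 3*(M-1)+3) ∨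
  (∃ i : Fin M, i.val < M ∧ i.val = M-1 ∧ x = Sum.inl (i,(6:Fin 7)) ∧ y = Sum.inr true ∧ a = 3*(M-1)+3 ∧ b = 0) ∨
  (∃ i i2 : Fin M, (i.val < M ∧ i2.val < M ∧ i2.val = i.val+1) ∧ x = Sum.inl (i,(6:Fin 7)) ∧ y = Sum.inl (i2,(0:Fin 7)) ∧ a = 3*i.val+3 ∧ b = 3*(M-1-i2.val)+3) ∨
  (∃ i : Fin M, i.val < M ∧ x = Sum.inl (i,(0:Fin 7)) ∧ y = Sum.inl (i,(1:Fin 7)) ∧ a = 3*i.val+1 ∧ b = 3*(M-1-i.val)+2) ∨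
  (∃ i : Fin M, i.val < M ∧ x = Sum.inl (i,(0:Fin 7)) ∧ y = Sum.inl (i,(3:Fin 7)) ∧ a = 3*i.val+1 ∧ b = 3*(M-1-i.val)+3) ∨
  (∃ i : Fin M, i.val < M ∧ x = Sum.inl (i,(6:Fin 7)) ∧ y = Sum.inl (i,(1:Fin 7)) ∧ a = 3*i.val+2 ∧ b = 3*(M-1-i.val)+1) ∨
  (∃ i : Fin M, i.val < M ∧ x = Sum.inl (i,(6:Fin 7)) ∧ y = Sum.inl (i,(2:Fin 7)) ∧ a = 3*i.val+3 ∧ b = 3*(M-1-i.val)+1) ∨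
  (∃ i : Fin M, i.val < M ∧ x = Sum.inl (i,(1:Fin 7)) ∧ y = Sum.inl (i,(5:Fin 7)) ∧ a = 3*i.val+2 ∧ b = 3*(M-1-i.val)+2) ∨
  (∃ i : Fin M, i.val < M ∧ x = Sum.inl (i,(2:Fin 7)) ∧ y = Sum.inl (i,(4:Fin 7)) ∧ a = 3*i.val+3 ∧ b = 3*(M-1-i.val)+2) ∨
  (∃ i : Fin M, i.val < M ∧ x = Sum.inl (i,(3:Fin 7)) ∧ y = Sum.inl (i,(4:Fin 7)) ∧ a = 3*i.val+2 ∧ b = 3*(M-1-i.val)+3)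

lemma code {M : ℕ} : ∀ x y : Vtx M, bRel M x y →
    D M x y (min (fL M x) (fL M y)) (min (fR M x) (fR M y)) := by
  intro x y h
  rcases x with ⟨i, j⟩ | bx
  · rcases y with ⟨i2, j2⟩ | by'
    · rcases h with ⟨rfl, hgp⟩ | ⟨h1, h2, h3⟩
      · rcases hgp with ⟨e1,e2⟩|⟨e1,e2⟩|⟨e1,e2⟩|⟨e1,e2⟩|⟨e1,e2⟩|⟨e1,e2⟩|⟨e1,e2⟩
        · obtain rfl : j = (0:Fin 7) := Fin.ext (by simpa using e1)
          obtain rfl : j2 = (1:Fin 7) := Fin.ext (by simpa using e2)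
          refine Or.inr (Or.inr (Or.inr (Or.inl (⟨i, i.isLt, rfl, rfl, ?_, ?_⟩))))
          · show min (3*i.val + 1) (3*i.val + 2) = 3*i.val + 1; omega
          · show min (3*(M-1-i.val) + 3) (3*(M-1-i.val) + 2) = 3*(M-1-i.val) + 2; omega
        · obtain rfl : j = (0:Fin 7) := Fin.ext (by simpa using e1)
          obtain rfl : j2 = (3:Fin 7) := Fin.ext (by simpa using e2)
          refine Or.inr (Or.inr (Or.inr (Or.inr (Or.inl (⟨i, i.isLt, rfl, rfl, ?_, ?_⟩)))))
          · show min (3*i.val + 1) (3*i.val + 2) = 3*i.val + 1; omega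
          · show min (3*(M-1-i.val) + 3) (3*(M-1-i.val) + 4) = 3*(M-1-i.val) + 3; omega
        · obtain rfl : j = (6:Fin 7) := Fin.ext (by simpa using e1)
          obtain rfl : j2 = (1:Fin 7) := Fin.ext (by simpa using e2)
          refine Or.inr (Or.inr (Or.inr (Or.inr (Or.inr (Or.inl (⟨i, i.isLt, rfl, rfl, ?_, ?_⟩))))))
          · show min (3*i.val + 3) (3*i.val + 2) = 3*i.val + 2; omega
          · show min (3*(M-1-i.val) + 1) (3*(M-1-i.val) + 2) = 3*(M-1-i.val) + 1; omega
        · obtain rfl : j = (6:Fin 7) := Fin.ext (by simpa using e1)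
          obtain rfl : j2 = (2:Fin 7) := Fin.ext (by simpa using e2)
          refine Or.inr (Or.inr (Or.inr (Or.inr (Or.inr (Or.inr (Or.inl (⟨i, i.isLt, rfl, rfl, ?_, ?_⟩)))))))
          · show min (3*i.val + 3) (3*i.val + 4) = 3*i.val + 3; omega
          · show min (3*(M-1-i.val) + 1) (3*(M-1-i.val) + 2) = 3*(M-1-i.val) + 1; omega
        · obtain rfl : j = (1:Fin 7) := Fin.ext (by simpa using e1)
          obtain rfl : j2 = (5:Fin 7) := Fin.ext (by simpa using e2)
          refine Or.inr (Or.inr (Or.inr (Or.inr (Or.inr (Or.inr (Or.inr (Or.inl (⟨i, i.isLt, rfl, rfl, ?_, ?_⟩))))))))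
          · show min (3*i.val + 2) (3*i.val + 3) = 3*i.val + 2; omega
          · show min (3*(M-1-i.val) + 2) (3*(M-1-i.val) + 3) = 3*(M-1-i.val) + 2; omega
        · obtain rfl : j = (2:Fin 7) := Fin.ext (by simpa using e1)
          obtain rfl : j2 = (4:Fin 7) := Fin.ext (by simpa using e2)
          refine Or.inr (Or.inr (Or.inr (Or.inr (Or.inr (Or.inr (Or.inr (Or.inr (Or.inl (⟨i, i.isLt, rfl, rfl, ?_, ?_⟩)))))))))
          · show min (3*i.val + 4) (3*i.val + 3) = 3*i.val + 3; omega
          · show min (3*(M-1-i.val) + 2) (3*(M-1-i.val) + 3) = 3*(M-1-i.val) + 2; omega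
        · obtain rfl : j = (3:Fin 7) := Fin.ext (by simpa using e1)
          obtain rfl : j2 = (4:Fin 7) := Fin.ext (by simpa using e2)
          refine Or.inr (Or.inr (Or.inr (Or.inr (Or.inr (Or.inr (Or.inr (Or.inr (Or.inr (⟨i, i.isLt, rfl, rfl, ?_, ?_⟩)))))))))
          · show min (3*i.val + 2) (3*i.val + 3) = 3*i.val + 2; omega
          · show min (3*(M-1-i.val) + 4) (3*(M-1-i.val) + 3) = 3*(M-1-i.val) + 3; omega
      · obtain rfl : j = (6:Fin 7) := Fin.ext (by simpa using h2)
        obtain rfl : j2 = (0:Fin 7) := Fin.ext (by simpa using h3)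
        refine Or.inr (Or.inr (Or.inl (⟨i, i2, ⟨i.isLt, i2.isLt, h1⟩, rfl, rfl, ?_, ?_⟩)))
        · show min (3*i.val + 3) (3*i2.val + 1) = 3*i.val + 3
          omega
        · show min (3*(M-1-i.val) + 1) (3*(M-1-i2.val) + 3) = 3*(M-1-i2.val) + 3
          have := i2.isLt
          omega
    · cases by'
      · exact absurd h (by simp [bRel])
      · simp only [bRel] at h
        obtain ⟨hiM, hj6⟩ := h
        obtain rfl : j = (6:Fin 7) := Fin.ext (by simpa using hj6)
        refine Or.inr (Or.inl (⟨i, i.isLt, hiM, rfl, rfl, ?_, ?_⟩))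
        · show min (3*i.val + 3) (3*M + 1) = 3*(M-1)+3
          have := i.isLt
          omega
        · show min (3*(M-1-i.val) + 1) 0 = 0
          omega
  · cases bx
    · rcases y with ⟨i2, j2⟩ | by'
      · simp only [bRel] at h
        obtain ⟨hi0, hj0⟩ := h
        obtain rfl : j2 = (0:Fin 7) := Fin.ext (by simpa using hj0)
        refine Or.inl (⟨i2, i2.isLt, hi0, rfl, rfl, ?_, ?_⟩)
        · show min 0 (3*i2.val + 1) = 0
          omega
        · show min (3*M + 1) (3*(M-1-i2.val) + 3) = 3*(M-1)+3
          have := i2.isLt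
          omega
      · cases by' <;> exact absurd h (by simp [bRel])
    · exact absurd h (by rcases y with ⟨i2, j2⟩ | by' <;> first | simp [bRel] | (cases by' <;> simp [bRel]))

lemma key {M : ℕ} {x y x' y' : Vtx M} {a b : ℕ}
    (h1 : D M x y a b) (h2 : D M x' y' a b) : x = x' ∧ y = y' := by
  rcases h1 with ⟨i,hi1,hi2,rfl,rfl,ha,hb⟩|⟨i,hi1,hi2,rfl,rfl,ha,hb⟩|⟨i,i2,⟨hi1,hi2,hi3⟩,rfl,rfl,ha,hb⟩|⟨i,hi1,rfl,rfl,ha,hb⟩|⟨i,hi1,rfl,rfl,ha,hb⟩|⟨i,hi1,rfl,rfl,ha,hb⟩|⟨i,hi1,rfl,rfl,ha,hb⟩|⟨i,hi1,rfl,rfl,ha,hb⟩|⟨i,hi1,rfl,rfl,ha,hb⟩|⟨i,hi1,rfl,rfl,ha,hb⟩ <;>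
    rcases h2 with ⟨i',hi1',hi2',rfl,rfl,ha',hb'⟩|⟨i',hi1',hi2',rfl,rfl,ha',hb'⟩|⟨i',i2',⟨hi1',hi2',hi3'⟩,rfl,rfl,ha',hb'⟩|⟨i',hi1',rfl,rfl,ha',hb'⟩|⟨i',hi1',rfl,rfl,ha',hb'⟩|⟨i',hi1',rfl,rfl,ha',hb'⟩|⟨i',hi1',rfl,rfl,ha',hb'⟩|⟨i',hi1',rfl,rfl,ha',hb'⟩|⟨i',hi1',rfl,rfl,ha',hb'⟩|⟨i',hi1',rfl,rfl,ha',hb'⟩ <;>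
    first
      | exact ⟨rfl, by obtain rfl : i' = i := Fin.ext (by omega); rfl⟩
      | (obtain rfl : i' = i := Fin.ext (by omega)
         first
           | exact ⟨rfl, rfl⟩
           | (obtain rfl : i2' = i2 := Fin.ext (by omega); exact ⟨rfl, rfl⟩))
      | (exfalso; omega)

lemma edge_gen (hM : 1 ≤ M) :
    IsEdgeMetricGenerator (graph M) {Sum.inr false, Sum.inr true} := by
  intro e he f hf hne
  revert he hf hne
  refine Sym2.inductionOn₂ e f ?_
  intro a b c d he hf hne
  have hab : (graph M).Adj a b := he
  have hcd : (graph M).Adj c d := hf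
  by_contra hcon
  push_neg at hcon
  have hL := hcon (Sum.inr false) (by left; rfl)
  have hR := hcon (Sum.inr true) (by right; rfl)
  simp only [edgeDist, Sym2.lift_mk] at hL hR
  rw [distL hM, distL hM, distL hM, distL hM] at hL
  rw [distR hM, distR hM, distR hM, distR hM] at hR
  apply hne
  rcases hab with h1 | h1 <;> rcases hcd with h2 | h2
  · have d1 := code a b h1
    have d2 := code c d h2
    rw [← hL, ← hR] at d2
    obtain ⟨rfl, rfl⟩ := key d1 d2
    rfl
  · have d1 := code a b h1
    have d2 := code d c h2
    rw [min_comm (fL M d) (fL M c), min_comm (fR M d) (fR M c), ← hL, ← hR] at d2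
    obtain ⟨rfl, rfl⟩ := key d1 d2
    exact Sym2.eq_swap
  · have d1 := code b a h1
    have d2 := code c d h2
    rw [min_comm (fL M b) (fL M a), min_comm (fR M b) (fR M a)] at d1
    rw [← hL, ← hR] at d2
    obtain ⟨rfl, rfl⟩ := key d1 d2
    exact Sym2.eq_swap
  · have d1 := code b a h1
    have d2 := code d c h2
    rw [min_comm (fL M b) (fL M a), min_comm (fR M b) (fR M a)] at d1
    rw [min_comm (fL M d) (fL M c), min_comm (fR M d) (fR M c), ← hL, ← hR] at d2
    obtain ⟨rfl, rfl⟩ := key d1 d2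
    rfl

lemma edim_le (hM : 1 ≤ M) : edgeMetricDim (graph M) ≤ 2 := by
  apply Nat.sInf_le
  refine ⟨{Sum.inr false, Sum.inr true}, Set.toFinite _, edge_gen hM, ?_⟩
  rw [Set.ncard_pair (by simp)]

end ChainProof

/-- The difference `dim(G) - edim(G)` can be arbitrarily large: for every
`N ≥ 1` there is a connected graph `G` with `dim(G) - edim(G) ≥ N`. -/
theorem dim_sub_edim_unbounded (N : ℕ) (hN : 0 < N) :
    ∃ (V : Type) (_ : Fintype V) (G : SimpleGraph V),
      G.Connected ∧ edgeMetricDim G + N ≤ metricDim G := by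
  refine ⟨ChainProof.Vtx (N+2), inferInstance, ChainProof.graph (N+2),
    ChainProof.connected (by omega), ?_⟩
  have h1 := ChainProof.edim_le (M := N+2) (by omega)
  have h2 := ChainProof.metricDim_ge (M := N+2) (by omega)
  omega
end

section
/- For every positive integer N there exists a connected simple graph G such that edim(G) − dim(G) ≥ N; that is, the difference edim(G) − dim(G) can be arbitrarily large. -/
section Construction

abbrev Wt (k : ℕ) := Fin k ⊕ Finset (Fin k)
abbrev Vt (k : ℕ) := Option (Wt k)

def adjRel (k : ℕ) : Vt k → Vt k → Prop
  | none, none => False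
  | none, some _ => True
  | some _, none => True
  | some (Sum.inl i), some (Sum.inr A) => i ∈ A
  | some (Sum.inr A), some (Sum.inl i) => i ∈ A
  | some (Sum.inl _), some (Sum.inl _) => False
  | some (Sum.inr _), some (Sum.inr _) => False

instance adjRelDec (k : ℕ) : ∀ u v : Vt k, Decidable (adjRel k u v)
  | none, none => isFalse id
  | none, some _ => isTrue (by simp [adjRel])
  | some _, none => isTrue (by simp [adjRel])
  | some (.inl i), some (.inr A) => inferInstanceAs (Decidable (i ∈ A))
  | some (.inr A), some (.inl i) => inferInstanceAs (Decidable (i ∈ A))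
  | some (.inl _), some (.inl _) => isFalse id
  | some (.inr _), some (.inr _) => isFalse id

def Gr (k : ℕ) : SimpleGraph (Vt k) where
  Adj := adjRel k
  symm := ⟨by rintro (_|(i|A)) (_|(j|B)) h <;> simp_all [adjRel]⟩
  loopless := ⟨by rintro (_|(i|A)) h <;> simp_all [adjRel]⟩

@[simp] lemma gr_adj (k : ℕ) (u v : Vt k) : (Gr k).Adj u v ↔ adjRel k u v := Iff.rfl

lemma gr_conn (k : ℕ) : (Gr k).Connected := by
  rw [SimpleGraph.connected_iff]
  have h : ∀ x : Vt k, (Gr k).Reachable none x := by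
    rintro (_|x)
    · exact SimpleGraph.Reachable.refl none
    · exact SimpleGraph.Adj.reachable (by simp [adjRel])
  exact ⟨fun u v => (h u).symm.trans (h v), ⟨none⟩⟩

lemma gr_dist (k : ℕ) (u v : Vt k) :
    (Gr k).dist u v = if u = v then 0 else if adjRel k u v then 1 else 2 := by
  split_ifs with h1 h2
  · subst h1; exact SimpleGraph.dist_self
  · exact SimpleGraph.dist_eq_one_iff_adj.mpr h2
  · obtain ⟨a, rfl⟩ : ∃ a, u = some a := by
      match u, v with
      | none, none => exact absurd rfl h1
      | none, some _ => exact absurd (by simp [adjRel]) h2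
      | some a, _ => exact ⟨a, rfl⟩
    obtain ⟨b, rfl⟩ : ∃ b, v = some b := by
      match v with
      | none => exact absurd (by simp [adjRel] : adjRel k (some a) none) h2
      | some b => exact ⟨b, rfl⟩
    have hle := SimpleGraph.dist_le
      (SimpleGraph.Walk.cons (by simp [adjRel] : (Gr k).Adj (some a) none)
        (SimpleGraph.Walk.cons (by simp [adjRel] : (Gr k).Adj none (some b))
          SimpleGraph.Walk.nil))
    simp only [SimpleGraph.Walk.length_cons, SimpleGraph.Walk.length_nil] at hle
    have h0 : (Gr k).dist (some a) (some b) ≠ 0 :=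
      fun h0 => h1 ((gr_conn k).dist_eq_zero_iff.mp h0)
    have hne1 : (Gr k).dist (some a) (some b) ≠ 1 :=
      fun h0 => h2 (SimpleGraph.dist_eq_one_iff_adj.mp h0)
    omega

lemma gr_dist_ne_zero (k : ℕ) {u v : Vt k} (h : u ≠ v) : (Gr k).dist u v ≠ 0 := by
  rw [gr_dist]; split_ifs <;> simp_all

end Construction

section Gen

/-- the metric generator: hub plus the index vertices -/
def Sdim (k : ℕ) : Set (Vt k) :=
  insert none (Set.range (fun i : Fin k => (some (Sum.inl i) : Vt k)))

lemma sdim_gen (k : ℕ) : IsMetricGenerator (Gr k) (Sdim k) := by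
  have hnone : (none : Vt k) ∈ Sdim k := Set.mem_insert _ _
  have hinl : ∀ i : Fin k, (some (Sum.inl i) : Vt k) ∈ Sdim k :=
    fun i => Set.mem_insert_of_mem _ ⟨i, rfl⟩
  have key : ∀ u v : Vt k, u ≠ v → u ∈ Sdim k →
      ∃ z ∈ Sdim k, (Gr k).dist u z ≠ (Gr k).dist v z := by
    intro u v hne hu
    refine ⟨u, hu, ?_⟩
    rw [SimpleGraph.dist_self]
    exact fun h => gr_dist_ne_zero k (Ne.symm hne) h.symm
  have key2 : ∀ u v : Vt k, u ≠ v → v ∈ Sdim k →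
      ∃ z ∈ Sdim k, (Gr k).dist u z ≠ (Gr k).dist v z := by
    intro u v hne hv
    obtain ⟨z, hz, hd⟩ := key v u (Ne.symm hne) hv
    exact ⟨z, hz, hd.symm⟩
  rintro (_|(i|A)) (_|(j|B)) hne
  · exact absurd rfl hne
  · exact key _ _ hne hnone
  · exact key _ _ hne hnone
  · exact key2 _ _ hne hnone
  · exact key _ _ hne (hinl i)
  · exact key _ _ hne (hinl i)
  · exact key2 _ _ hne hnone
  · exact key2 _ _ hne (hinl j)
  · -- two set vertices
    have hAB : A ≠ B := fun h => hne (by rw [h])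
    obtain ⟨i, hi⟩ : ∃ i, ¬(i ∈ A ↔ i ∈ B) := by
      by_contra h
      push_neg at h
      exact hAB (Finset.ext fun i => h i)
    refine ⟨some (Sum.inl i), hinl i, ?_⟩
    rw [gr_dist, gr_dist]
    by_cases hA : i ∈ A <;> by_cases hB : i ∈ B <;>
      simp_all [adjRel]

lemma sdim_ncard (k : ℕ) : (Sdim k).ncard = k + 1 := by
  rw [Sdim, Set.ncard_insert_of_notMem (by simp) (Set.toFinite _),
    ← Set.image_univ,
    Set.ncard_image_of_injective _ (fun a b h => by simpa using h),
    Set.ncard_univ]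
  simp

lemma dim_le (k : ℕ) : metricDim (Gr k) ≤ k + 1 :=
  Nat.sInf_le ⟨Sdim k, Set.toFinite _, sdim_gen k, sdim_ncard k⟩

lemma edgeDist_mk {V : Type*} (G : SimpleGraph V) (a b z : V) :
    edgeDist G s(a, b) z = min (G.dist a z) (G.dist b z) := rfl

lemma univ_edge_gen (k : ℕ) : IsEdgeMetricGenerator (Gr k) Set.univ := by
  intro e he f hf hne
  induction e using Sym2.ind with | _ a b =>
  induction f using Sym2.ind with | _ c d =>
  rw [SimpleGraph.mem_edgeSet] at he hf
  have hx : (a ≠ c ∧ a ≠ d) ∨ (b ≠ c ∧ b ≠ d) := by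
    by_contra h
    push_neg at h
    obtain ⟨h1, h2⟩ := h
    by_cases hac : a = c
    · by_cases hbd : b = d
      · exact hne (by rw [hac, hbd])
      · have hbc : b = c := by
          by_contra hbc; exact hbd (h2 hbc)
        exact he.ne (hac.trans hbc.symm)
    · have had : a = d := h1 hac
      by_cases hbc : b = c
      · exact hne (by rw [had, hbc, Sym2.eq_swap])
      · have hbd : b = d := h2 hbc
        exact he.ne (had.trans hbd.symm)
  rcases hx with ⟨h1, h2⟩ | ⟨h1, h2⟩
  · refine ⟨a, trivial, ?_⟩
    rw [edgeDist_mk, edgeDist_mk, SimpleGraph.dist_self]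
    have := gr_dist_ne_zero k h1.symm
    have := gr_dist_ne_zero k h2.symm
    omega
  · refine ⟨b, trivial, ?_⟩
    rw [edgeDist_mk, edgeDist_mk, SimpleGraph.dist_self]
    have := gr_dist_ne_zero k h1.symm
    have := gr_dist_ne_zero k h2.symm
    omega

lemma spoke_eq (k : ℕ) (x y : Wt k) (z : Vt k) (hx : z ≠ some x) (hy : z ≠ some y) :
    edgeDist (Gr k) s(none, some x) z = edgeDist (Gr k) s(none, some y) z := by
  rw [edgeDist_mk, edgeDist_mk]
  rcases z with _ | w
  · simp [SimpleGraph.dist_self]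
  · have h1 : (Gr k).dist none (some w) = 1 := by
      rw [gr_dist]; simp [adjRel]
    have h2 := gr_dist_ne_zero k (show (some x : Vt k) ≠ some w from fun h => hx h.symm)
    have h3 := gr_dist_ne_zero k (show (some y : Vt k) ≠ some w from fun h => hy h.symm)
    omega

lemma edim_ge (k : ℕ) : k + 2 ^ k - 1 ≤ edgeMetricDim (Gr k) := by
  have hne : {n | ∃ S : Set (Vt k), S.Finite ∧ IsEdgeMetricGenerator (Gr k) S ∧
      S.ncard = n}.Nonempty :=
    ⟨(Set.univ : Set (Vt k)).ncard, Set.univ, Set.toFinite _, univ_edge_gen k, rfl⟩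
  obtain ⟨S, hSf, hSg, hScard⟩ := Nat.sInf_mem hne
  rw [edgeMetricDim, ← hScard]
  set A : Set (Vt k) := Set.range (fun w : Wt k => (some w : Vt k)) with hAdef
  have hsub : (A \ S).Subsingleton := by
    rintro v1 ⟨⟨x, rfl⟩, hx⟩ v2 ⟨⟨y, rfl⟩, hy⟩
    by_contra hne'
    have hxy : x ≠ y := fun h => hne' (by rw [h])
    have hadj1 : s((none : Vt k), some x) ∈ (Gr k).edgeSet := by
      rw [SimpleGraph.mem_edgeSet]; simp [adjRel]
    have hadj2 : s((none : Vt k), some y) ∈ (Gr k).edgeSet := by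
      rw [SimpleGraph.mem_edgeSet]; simp [adjRel]
    have hef : s((none : Vt k), some x) ≠ s((none : Vt k), some y) := by
      intro h
      rw [Sym2.eq_iff] at h
      rcases h with ⟨-, h⟩ | ⟨h, -⟩
      · exact hxy (by simpa using h)
      · simp at h
    obtain ⟨z, hzS, hzd⟩ := hSg _ hadj1 _ hadj2 hef
    have hz1 : z ≠ some x := by rintro rfl; exact hx hzS
    have hz2 : z ≠ some y := by rintro rfl; exact hy hzS
    exact hzd (spoke_eq k x y z hz1 hz2)
  have hA : A.ncard = k + 2 ^ k := by
    rw [hAdef, ← Set.image_univ,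
      Set.ncard_image_of_injective _ (Option.some_injective _), Set.ncard_univ]
    simp [Nat.card_eq_fintype_card, Fintype.card_finset]
  have h1 : A.ncard ≤ (A \ S).ncard + S.ncard :=
    Set.ncard_le_ncard_diff_add_ncard A S hSf
  have h2 : (A \ S).ncard ≤ 1 := by
    rcases hsub.eq_empty_or_singleton with h | ⟨x, h⟩ <;> simp [h]
  omega

end Gen


/-- The difference `edim(G) - dim(G)` can be arbitrarily large: for every
`N ≥ 1` there is a connected graph `G` with `edim(G) - dim(G) ≥ N`. -/
theorem edim_sub_dim_unbounded (N : ℕ) (hN : 0 < N) :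
    ∃ (V : Type) (_ : Fintype V) (G : SimpleGraph V),
      G.Connected ∧ metricDim G + N ≤ edgeMetricDim G := by
  refine ⟨Vt (N + 1), inferInstance, Gr (N + 1), gr_conn _, ?_⟩
  have h1 := dim_le (N + 1)
  have h2 := edim_ge (N + 1)
  have h3 : N + 1 < 2 ^ (N + 1) := Nat.lt_two_pow_self
  omega
end

section
/- Let n1 ≥ 5, n2 ≥ 1 and n3 ≥ 2. Then the metric dimension of G_{n1,n2,n3} satisfies dim(G_{n1,n2,n3}) ≥ n3. -/
/-- Vertices of the graph `G_{n1,n2,n3}`: cycle vertices `a 0, …, a (n1-1)`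
(with `a k` standing for the paper's `a_{k+1}`), path vertices
`b 0, …, b (n2-1)`, the special vertices `c` and `i`, and pendant vertices
`j 0, …, j (n3-1)` attached to `i`. -/
inductive GVert (n1 n2 n3 : ℕ) : Type where
  | a : Fin n1 → GVert n1 n2 n3
  | b : Fin n2 → GVert n1 n2 n3
  | c : GVert n1 n2 n3
  | i : GVert n1 n2 n3
  | j : Fin n3 → GVert n1 n2 n3

/-- Base relation whose symmetrization gives the edges of `G_{n1,n2,n3}`:
the cycle `a_1 a_2 ⋯ a_{n1} a_1`, the path `b_1 b_2 ⋯ b_{n2}` joined by the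
edge `a_2 b_1`, the edge `a_{n1} c`, the edge `a_1 i`, and the pendant edges
`i j_t`. -/
def GRel (n1 n2 n3 : ℕ) : GVert n1 n2 n3 → GVert n1 n2 n3 → Prop
  | .a k, .a l => (l : ℕ) = ((k : ℕ) + 1) % n1
  | .a k, .b m => (k : ℕ) = 1 ∧ (m : ℕ) = 0
  | .b m, .b m' => (m' : ℕ) = (m : ℕ) + 1
  | .a k, .c => (k : ℕ) = n1 - 1
  | .a k, .i => (k : ℕ) = 0
  | .i, .j _ => True
  | _, _ => False

/-- The graph `G_{n1,n2,n3}` from the paper. -/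
def GGraph (n1 n2 n3 : ℕ) : SimpleGraph (GVert n1 n2 n3) :=
  SimpleGraph.fromRel (GRel n1 n2 n3)

/- ===== auxiliary lemmas ===== -/

instance {n1 n2 n3 : ℕ} : Finite (GVert n1 n2 n3) := by
  have : Function.Injective (fun v : GVert n1 n2 n3 =>
      (match v with
        | .a k => Sum.inl k
        | .b m => Sum.inr (Sum.inl m)
        | .c => Sum.inr (Sum.inr (Sum.inl true))
        | .i => Sum.inr (Sum.inr (Sum.inl false))
        | .j t => Sum.inr (Sum.inr (Sum.inr t)) :
        Fin n1 ⊕ Fin n2 ⊕ Bool ⊕ Fin n3)) := by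
    intro x y h
    cases x <;> cases y <;> simp_all
  exact Finite.of_injective _ this

lemma adj_of_rel {n1 n2 n3 : ℕ} {u v : GVert n1 n2 n3} (hne : u ≠ v) (h : GRel n1 n2 n3 u v) :
    (GGraph n1 n2 n3).Adj u v := by
  rw [GGraph, SimpleGraph.fromRel_adj]
  exact ⟨hne, Or.inl h⟩

lemma neighbor_of_j {n1 n2 n3 : ℕ} {s : Fin n3} {x : GVert n1 n2 n3}
    (h : (GGraph n1 n2 n3).Adj (.j s) x) : x = .i := by
  rw [GGraph, SimpleGraph.fromRel_adj] at h
  obtain ⟨-, h | h⟩ := h <;> cases x <;> simp_all [GRel]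

lemma reachA {n1 n2 n3 : ℕ} (h1 : 5 ≤ n1) : ∀ k : ℕ, (hk : k < n1) →
    (GGraph n1 n2 n3).Reachable (.a ⟨0, by omega⟩) (.a ⟨k, hk⟩)
  | 0, hk => by rfl
  | k+1, hk => by
    refine (reachA h1 k (by omega)).trans (SimpleGraph.Adj.reachable ?_)
    refine adj_of_rel (by simp) ?_
    show ((⟨k+1, hk⟩ : Fin n1) : ℕ) = (((⟨k, by omega⟩ : Fin n1) : ℕ) + 1) % n1
    simp [Nat.mod_eq_of_lt hk]

lemma reachB {n1 n2 n3 : ℕ} (h1 : 5 ≤ n1) : ∀ m : ℕ, (hm : m < n2) →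
    (GGraph n1 n2 n3).Reachable (.a ⟨0, by omega⟩) (.b ⟨m, hm⟩)
  | 0, hm => by
    refine (reachA h1 1 (by omega)).trans (SimpleGraph.Adj.reachable ?_)
    exact adj_of_rel (by simp) ⟨by simp, by simp⟩
  | m+1, hm => by
    refine (reachB h1 m (by omega)).trans (SimpleGraph.Adj.reachable ?_)
    refine adj_of_rel (by simp) ?_
    show ((⟨m+1, hm⟩ : Fin n2) : ℕ) = ((⟨m, by omega⟩ : Fin n2) : ℕ) + 1
    simp

lemma reach_all {n1 n2 n3 : ℕ} (h1 : 5 ≤ n1) (v : GVert n1 n2 n3) :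
    (GGraph n1 n2 n3).Reachable (.a ⟨0, by omega⟩) v := by
  have hri : (GGraph n1 n2 n3).Reachable (.a ⟨0, by omega⟩) .i :=
    SimpleGraph.Adj.reachable (adj_of_rel (by simp) (by simp [GRel]))
  cases v with
  | a k =>
    have := reachA (n2 := n2) (n3 := n3) h1 k.1 k.2
    simpa using this
  | b m =>
    have := reachB (n3 := n3) h1 m.1 m.2
    simpa using this
  | c =>
    refine (reachA h1 (n1-1) (by omega)).trans (SimpleGraph.Adj.reachable ?_)
    exact adj_of_rel (by simp) (by simp [GRel])
  | i => exact hri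
  | j t =>
    exact hri.trans (SimpleGraph.Adj.reachable (adj_of_rel (by simp) (by simp [GRel])))

lemma preconn {n1 n2 n3 : ℕ} (h1 : 5 ≤ n1) : (GGraph n1 n2 n3).Preconnected := fun u v =>
  (reach_all h1 u).symm.trans (reach_all h1 v)

/-- Pendant-vertex distance formula: `d(u, j_s) = d(u, i) + 1` for `u ≠ j_s`. -/
lemma dist_j {n1 n2 n3 : ℕ} (h1 : 5 ≤ n1) {s : Fin n3} {u : GVert n1 n2 n3}
    (hu : u ≠ .j s) :
    (GGraph n1 n2 n3).dist u (.j s) = (GGraph n1 n2 n3).dist u .i + 1 := by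
  have hadj : (GGraph n1 n2 n3).Adj .i (.j s) := adj_of_rel (by simp) (by simp [GRel])
  have hreach : (GGraph n1 n2 n3).Reachable (.j s) u := preconn h1 _ _
  have : Nonempty (GVert n1 n2 n3) := ⟨.i⟩
  have hconn : (GGraph n1 n2 n3).Connected := ⟨preconn h1⟩
  apply le_antisymm
  · calc (GGraph n1 n2 n3).dist u (.j s)
        ≤ (GGraph n1 n2 n3).dist u .i + (GGraph n1 n2 n3).dist .i (.j s) :=
          hconn.dist_triangle
      _ = (GGraph n1 n2 n3).dist u .i + 1 := by
          rw [SimpleGraph.dist_eq_one_iff_adj.mpr hadj]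
  · obtain ⟨p, hp⟩ := hreach.exists_walk_length_eq_dist
    cases p with
    | nil => exact absurd rfl hu.symm
    | @cons _ x _ h q =>
      have hx := neighbor_of_j h
      subst hx
      have hq : (GGraph n1 n2 n3).dist .i u ≤ q.length := SimpleGraph.dist_le q
      have hlen : q.length + 1 = (GGraph n1 n2 n3).dist (.j s) u := by simpa using hp
      rw [SimpleGraph.dist_comm (u := GVert.j s) (v := u)] at hlen
      rw [SimpleGraph.dist_comm (u := GVert.i) (v := u)] at hq
      omega

/-- Distance-2 helper. -/
lemma dist_eq_two {n1 n2 n3 : ℕ} (h1 : 5 ≤ n1) {u v w : GVert n1 n2 n3}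
    (huw : u ≠ w) (hna : ¬ (GGraph n1 n2 n3).Adj u w)
    (h1' : (GGraph n1 n2 n3).Adj u v) (h2' : (GGraph n1 n2 n3).Adj v w) :
    (GGraph n1 n2 n3).dist u w = 2 := by
  have hle : (GGraph n1 n2 n3).dist u w ≤ 2 := by
    have := SimpleGraph.dist_le (SimpleGraph.Walk.cons h1' (SimpleGraph.Walk.cons h2'
      SimpleGraph.Walk.nil))
    simpa using this
  have hpos : 0 < (GGraph n1 n2 n3).dist u w := (preconn h1 u w).pos_dist_of_ne huw
  have hne1 : (GGraph n1 n2 n3).dist u w ≠ 1 :=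
    fun h => hna (SimpleGraph.dist_eq_one_iff_adj.mp h)
  omega

lemma dist_a1_i {n1 n2 n3 : ℕ} (h1 : 5 ≤ n1) :
    (GGraph n1 n2 n3).dist (.a ⟨1, by omega⟩) .i = 2 := by
  refine dist_eq_two h1 (by simp) ?_ (v := .a ⟨0, by omega⟩) ?_ ?_
  · rw [GGraph, SimpleGraph.fromRel_adj]
    simp [GRel]
  · refine (adj_of_rel (by simp) ?_).symm
    show ((⟨1, by omega⟩ : Fin n1) : ℕ) = (((⟨0, by omega⟩ : Fin n1) : ℕ) + 1) % n1
    simp [Nat.mod_eq_of_lt (by omega : 1 < n1)]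
  · exact adj_of_rel (by simp) (by simp [GRel])

lemma dist_alast_i {n1 n2 n3 : ℕ} (h1 : 5 ≤ n1) :
    (GGraph n1 n2 n3).dist (.a ⟨n1 - 1, by omega⟩) .i = 2 := by
  refine dist_eq_two h1 (by simp) ?_ (v := .a ⟨0, by omega⟩) ?_ ?_
  · rw [GGraph, SimpleGraph.fromRel_adj]
    simp [GRel]
    omega
  · refine adj_of_rel (by simp; omega) ?_
    show ((⟨0, by omega⟩ : Fin n1) : ℕ) = (((⟨n1 - 1, by omega⟩ : Fin n1) : ℕ) + 1) % n1
    simp [Nat.sub_add_cancel (by omega : 1 ≤ n1)]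
  · exact adj_of_rel (by simp) (by simp [GRel])

/-- The whole vertex set is a metric generator. -/
lemma gen_univ {n1 n2 n3 : ℕ} (h1 : 5 ≤ n1) :
    IsMetricGenerator (GGraph n1 n2 n3) Set.univ := by
  intro u v huv
  refine ⟨u, Set.mem_univ u, ?_⟩
  rw [SimpleGraph.dist_self]
  have := ((preconn h1 v u).pos_dist_of_ne (Ne.symm huv))
  omega

/-- Observation 1 (vertex part): `dim(G_{n1,n2,n3}) ≥ n3`. -/
theorem metricDim_GGraph_lower (n1 n2 n3 : ℕ) (h1 : 5 ≤ n1) (h2 : 1 ≤ n2) (h3 : 2 ≤ n3) :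
    n3 ≤ metricDim (GGraph n1 n2 n3) := by
  apply le_csInf
  · exact ⟨Set.univ.ncard, Set.univ, Set.finite_univ, gen_univ h1, rfl⟩
  · rintro n ⟨S, hSfin, hgen, rfl⟩
    have hjinj : Function.Injective (GVert.j : Fin n3 → GVert n1 n2 n3) := by
      intro s t h
      simpa using h
    set J : Set (GVert n1 n2 n3) := Set.range GVert.j with hJ
    have hJfin : J.Finite := Set.finite_range _
    have hJcard : J.ncard = n3 := by
      rw [hJ, ← Set.image_univ, Set.ncard_image_of_injective _ hjinj, Set.ncard_univ,
        Nat.card_eq_fintype_card, Fintype.card_fin]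
    have hsub : (J \ S).Subsingleton := by
      rintro x ⟨⟨s, rfl⟩, hxS⟩ y ⟨⟨t, rfl⟩, hyS⟩
      by_contra hxy
      obtain ⟨z, hzS, hz⟩ := hgen _ _ hxy
      have hzx : z ≠ GVert.j s := fun h => hxS (h ▸ hzS)
      have hzy : z ≠ GVert.j t := fun h => hyS (h ▸ hzS)
      apply hz
      rw [SimpleGraph.dist_comm, dist_j h1 hzx, ← dist_j h1 hzy, SimpleGraph.dist_comm]
    have hd1 : (J \ S).ncard ≤ 1 :=
      (Set.ncard_le_one hJfin.diff).mpr (fun a ha b hb => hsub ha hb)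
    have hcount : (J ∩ S).ncard + (J \ S).ncard = J.ncard :=
      Set.ncard_inter_add_ncard_diff_eq_ncard J S hJfin
    have hane : (GVert.a ⟨1, by omega⟩ : GVert n1 n2 n3) ≠ .a ⟨n1 - 1, by omega⟩ := by
      simp
      omega
    obtain ⟨z0, hz0S, hz0⟩ := hgen _ _ hane
    have hz0J : z0 ∉ J := by
      rintro ⟨s, rfl⟩
      apply hz0
      rw [dist_j h1 (by simp), dist_j h1 (by simp), dist_a1_i h1, dist_alast_i h1]
    have hsubS : insert z0 (J ∩ S) ⊆ S :=
      Set.insert_subset hz0S (Set.inter_subset_right)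
    have hle : (insert z0 (J ∩ S)).ncard ≤ S.ncard := Set.ncard_le_ncard hsubS hSfin
    rw [Set.ncard_insert_of_notMem (fun h => hz0J h.1) (hJfin.inter_of_left _)] at hle
    omega
end

section
/- Let n1 ≥ 5, n2 ≥ 1 and n3 ≥ 2. Then the metric dimension of G_{n1,n2,n3} satisfies dim(G_{n1,n2,n3}) ≤ n3 + 1. -/
namespace GAux

open SimpleGraph

variable {n1 n2 n3 : ℕ}

/-- cycle vertex with wrap-around index -/
def A (hn : 0 < n1) (k : ℕ) : GVert n1 n2 n3 := .a ⟨k % n1, Nat.mod_lt _ hn⟩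

lemma A_eq (hn : 0 < n1) {k l : ℕ} (h : k % n1 = l % n1) :
    (A hn k : GVert n1 n2 n3) = A hn l := by
  simp [A, h]

lemma adj_iff {u v : GVert n1 n2 n3} :
    (GGraph n1 n2 n3).Adj u v ↔ u ≠ v ∧ (GRel n1 n2 n3 u v ∨ GRel n1 n2 n3 v u) :=
  Iff.rfl

lemma adjA (h1 : 2 ≤ n1) (hn : 0 < n1) (k : ℕ) :
    (GGraph n1 n2 n3).Adj (A hn k) (A hn (k+1)) := by
  have hmod : (k + 1) % n1 = (k % n1 + 1) % n1 := by
    conv_lhs => rw [Nat.add_mod]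
    rw [Nat.mod_eq_of_lt (by omega : 1 < n1)]
  have hk := Nat.mod_lt k (y := n1) hn
  rcases Nat.lt_or_ge (k % n1 + 1) n1 with hlt | hge
  · have h2 : (k+1) % n1 = k % n1 + 1 := by rw [hmod, Nat.mod_eq_of_lt hlt]
    refine adj_iff.mpr ⟨?_, Or.inl ?_⟩
    · simp only [A, ne_eq, GVert.a.injEq, Fin.mk.injEq]
      omega
    · simpa [A, GRel] using h2
  · have hk1 : k % n1 + 1 = n1 := by omega
    have h2 : (k+1) % n1 = 0 := by rw [hmod, hk1, Nat.mod_self]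
    refine adj_iff.mpr ⟨?_, Or.inl ?_⟩
    · simp only [A, ne_eq, GVert.a.injEq, Fin.mk.injEq]
      omega
    · simp only [A, GRel]
      omega

lemma walkA (h1 : 2 ≤ n1) (hn : 0 < n1) (t k : ℕ) :
    ∃ p : (GGraph n1 n2 n3).Walk (A hn k) (A hn (k+t)), p.length = t := by
  induction t generalizing k with
  | zero => exact ⟨Walk.nil, rfl⟩
  | succ t ih =>
    obtain ⟨p, hp⟩ := ih (k+1)
    refine ⟨Walk.cons (adjA h1 hn k) (p.copy rfl (by rw [show k+1+t = k+(t+1) by omega])), ?_⟩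
    simp [hp]

lemma distA (h1 : 2 ≤ n1) (hn : 0 < n1) (t k : ℕ) :
    (GGraph n1 n2 n3).dist (A hn k) (A hn (k+t)) ≤ t := by
  obtain ⟨p, hp⟩ := walkA (n2 := n2) (n3 := n3) h1 hn t k
  exact le_trans (SimpleGraph.dist_le p) (le_of_eq hp)

lemma adj_dist_le {u v : GVert n1 n2 n3} (h : (GGraph n1 n2 n3).Adj u v) :
    (GGraph n1 n2 n3).dist u v ≤ 1 := by
  simpa using SimpleGraph.dist_le (Walk.cons h Walk.nil)


lemma adjAB (h1 : 2 ≤ n1) (hn : 0 < n1) (hb : 0 < n2) :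
    (GGraph n1 n2 n3).Adj (A hn 1) (.b ⟨0, hb⟩) := by
  refine adj_iff.mpr ⟨by simp [A], Or.inl ?_⟩
  show 1 % n1 = 1 ∧ (0:ℕ) = 0
  exact ⟨Nat.mod_eq_of_lt (by omega), rfl⟩

lemma adjB (hn : 0 < n1) {m : ℕ} (h : m + 1 < n2) :
    (GGraph n1 n2 n3).Adj (.b ⟨m, by omega⟩) (.b ⟨m+1, h⟩) := by
  refine adj_iff.mpr ⟨by simp, Or.inl ?_⟩
  simp [GRel]

lemma adjAC (hn : 0 < n1) :
    (GGraph n1 n2 n3).Adj (A hn (n1-1)) .c := by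
  refine adj_iff.mpr ⟨by simp [A], Or.inl ?_⟩
  simp only [A, GRel]
  exact Nat.mod_eq_of_lt (by omega)

lemma adjAI (hn : 0 < n1) :
    (GGraph n1 n2 n3).Adj (A hn 0) .i := by
  refine adj_iff.mpr ⟨by simp [A], Or.inl ?_⟩
  simp [A, GRel]

lemma adjIJ (t : Fin n3) :
    (GGraph n1 n2 n3).Adj .i (.j t) := by
  refine adj_iff.mpr ⟨by simp, Or.inl ?_⟩
  simp [GRel]

lemma walkB (hn : 0 < n1) (t : ℕ) : ∀ (m : ℕ) (h : m + t < n2),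
    ∃ p : (GGraph n1 n2 n3).Walk (.b ⟨m, by omega⟩) (.b ⟨m+t, h⟩), p.length = t := by
  induction t with
  | zero => exact fun m h => ⟨Walk.nil, rfl⟩
  | succ t ih =>
    intro m h
    obtain ⟨p, hp⟩ := ih (m+1) (by omega)
    refine ⟨Walk.cons (adjB hn (by omega)) (p.copy rfl (by simp only [GVert.b.injEq, Fin.mk.injEq]; omega)), ?_⟩
    simp [hp]

lemma distB (hn : 0 < n1) (t m : ℕ) (h : m + t < n2) :
    (GGraph n1 n2 n3).dist (.b ⟨m, by omega⟩) (.b ⟨m+t, h⟩) ≤ t := by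
  obtain ⟨p, hp⟩ := walkB (n3 := n3) hn t m h
  exact le_trans (SimpleGraph.dist_le p) (le_of_eq hp)

lemma a_eq_A (hn : 0 < n1) (k : Fin n1) : GVert.a (n2 := n2) (n3 := n3) k = A hn (k : ℕ) := by
  simp [A, Nat.mod_eq_of_lt k.isLt]

lemma reach_A0 (h1 : 2 ≤ n1) (hn : 0 < n1) :
    ∀ u : GVert n1 n2 n3, (GGraph n1 n2 n3).Reachable u (A hn 0) := by
  have hA : ∀ k : ℕ, (GGraph n1 n2 n3).Reachable (A hn k) (A hn 0) := by
    intro k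
    obtain ⟨p, -⟩ := walkA (n2 := n2) (n3 := n3) h1 hn (n1 - k % n1) k
    have he : (A hn (k + (n1 - k % n1)) : GVert n1 n2 n3) = A hn 0 := by
      apply A_eq
      have hk := Nat.mod_lt k (y := n1) hn
      have hd := Nat.div_add_mod k n1
      have he2 : k + (n1 - k % n1) = n1 * (k / n1) + n1 := by omega
      rw [he2, Nat.add_mod, Nat.mul_mod_right, Nat.mod_self]
    exact ⟨p.copy rfl he⟩
  have hb : ∀ (m : ℕ) (h : m < n2),
      (GGraph n1 n2 n3).Reachable (.b ⟨m, h⟩) (A hn 0) := by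
    intro m
    induction m with
    | zero => exact fun h => (adjAB h1 hn h).symm.reachable.trans (hA 1)
    | succ m ih =>
      intro h
      exact (adjB hn h).symm.reachable.trans (ih (by omega))
  intro u
  cases u with
  | a k => rw [a_eq_A hn k]; exact hA _
  | b m => exact hb m.val (by simpa using m.isLt)
  | c => exact (adjAC hn).symm.reachable.trans (hA _)
  | i => exact (adjAI hn).symm.reachable
  | j t => exact (adjIJ t).symm.reachable.trans (adjAI hn).symm.reachable

lemma conn (h1 : 2 ≤ n1) (hn : 0 < n1) : (GGraph n1 n2 n3).Connected := by
  have : Nonempty (GVert n1 n2 n3) := ⟨.i⟩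
  exact ⟨fun u v => (reach_A0 h1 hn u).trans (reach_A0 h1 hn v).symm⟩

/-- Lipschitz lower bound for graph distance. -/
lemma lip_lower {V : Type*} {G : SimpleGraph V} (f : V → ℕ)
    (hf : ∀ u v, G.Adj u v → f u ≤ f v + 1) {u z : V} (hz : f z = 0)
    (hr : G.Reachable u z) : f u ≤ G.dist u z := by
  have key : ∀ {x y : V} (p : G.Walk x y), f x ≤ f y + p.length := by
    intro x y p
    induction p with
    | nil => simp
    | cons h q ih =>
      have := hf _ _ h
      simp only [Walk.length_cons]
      omega
  obtain ⟨p, hp⟩ := hr.exists_walk_length_eq_dist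
  have := key p
  omega


/-- exact distance to `c` -/
def fc (n1 n2 n3 : ℕ) : GVert n1 n2 n3 → ℕ
  | .a k => 1 + min ((k:ℕ)+1) (n1-1-(k:ℕ))
  | .b m => (m:ℕ) + 4
  | .c => 0
  | .i => 3
  | .j _ => 4

/-- exact distance to `j 0` -/
def fj (n1 n2 n3 : ℕ) : GVert n1 n2 n3 → ℕ
  | .a k => 2 + min (k:ℕ) (n1-(k:ℕ))
  | .b m => (m:ℕ) + 4
  | .c => 4
  | .i => 1
  | .j t => if (t:ℕ) = 0 then 0 else 2

/-- lower bound function for distance to `b (n2-1)` -/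
def fb (n1 n2 n3 : ℕ) : GVert n1 n2 n3 → ℕ
  | .b m => (n2-1) - (m:ℕ)
  | _ => n2

section lip

lemma key_mod {k l : Fin n1} (h : (l : ℕ) = ((k : ℕ) + 1) % n1) :
    ((k:ℕ)+1 < n1 ∧ (l:ℕ) = (k:ℕ)+1) ∨ ((k:ℕ) = n1-1 ∧ (l:ℕ) = 0) := by
  have hk := k.isLt
  rcases Nat.lt_or_ge ((k:ℕ)+1) n1 with hlt | hge
  · rw [Nat.mod_eq_of_lt hlt] at h; exact Or.inl ⟨hlt, h⟩
  · have hk1 : (k:ℕ)+1 = n1 := by omega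
    rw [hk1, Nat.mod_self] at h
    exact Or.inr ⟨by omega, h⟩

lemma lipc (h1 : 5 ≤ n1) : ∀ u v : GVert n1 n2 n3, (GGraph n1 n2 n3).Adj u v →
    fc n1 n2 n3 u ≤ fc n1 n2 n3 v + 1 := by
  have key : ∀ u v : GVert n1 n2 n3, GRel n1 n2 n3 u v →
      fc n1 n2 n3 u ≤ fc n1 n2 n3 v + 1 ∧ fc n1 n2 n3 v ≤ fc n1 n2 n3 u + 1 := by
    intro u v h
    cases u <;> cases v <;> simp only [GRel] at h <;> simp only [fc]
    case a.a k l =>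
      have hk := k.isLt; have hl := l.isLt
      rcases key_mod h with ⟨hh, he⟩ | ⟨hh, he⟩ <;> omega
    case a.b k m => omega
    case b.b m m' => omega
    case a.c k => have := k.isLt; omega
    case a.i k => omega
    case i.j t => omega
  intro u v h
  rcases adj_iff.mp h with ⟨-, h | h⟩
  · exact (key u v h).1
  · exact (key v u h).2

lemma lipj (h1 : 5 ≤ n1) : ∀ u v : GVert n1 n2 n3, (GGraph n1 n2 n3).Adj u v →
    fj n1 n2 n3 u ≤ fj n1 n2 n3 v + 1 := by
  have key : ∀ u v : GVert n1 n2 n3, GRel n1 n2 n3 u v →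
      fj n1 n2 n3 u ≤ fj n1 n2 n3 v + 1 ∧ fj n1 n2 n3 v ≤ fj n1 n2 n3 u + 1 := by
    intro u v h
    cases u <;> cases v <;> simp only [GRel] at h <;> simp only [fj]
    case a.a k l =>
      have hk := k.isLt; have hl := l.isLt
      rcases key_mod h with ⟨hh, he⟩ | ⟨hh, he⟩ <;> omega
    case a.b k m => omega
    case b.b m m' => omega
    case a.c k => have := k.isLt; omega
    case a.i k => omega
    case i.j t => split <;> omega
  intro u v h
  rcases adj_iff.mp h with ⟨-, h | h⟩
  · exact (key u v h).1
  · exact (key v u h).2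

lemma lipb (h1 : 5 ≤ n1) (h2 : 1 ≤ n2) : ∀ u v : GVert n1 n2 n3, (GGraph n1 n2 n3).Adj u v →
    fb n1 n2 n3 u ≤ fb n1 n2 n3 v + 1 := by
  have key : ∀ u v : GVert n1 n2 n3, GRel n1 n2 n3 u v →
      fb n1 n2 n3 u ≤ fb n1 n2 n3 v + 1 ∧ fb n1 n2 n3 v ≤ fb n1 n2 n3 u + 1 := by
    intro u v h
    cases u <;> cases v <;> simp only [GRel] at h <;> simp only [fb]
    case a.a k l => omega
    case a.b k m => omega
    case b.b m m' => have := m'.isLt; omega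
    case a.c k => omega
    case a.i k => omega
    case i.j t => omega
  intro u v h
  rcases adj_iff.mp h with ⟨-, h | h⟩
  · exact (key u v h).1
  · exact (key v u h).2

end lip

section exact

lemma hA0 (hn : 0 < n1) : (A hn n1 : GVert n1 n2 n3) = A hn 0 :=
  A_eq hn (by simp [Nat.mod_self])

lemma hAk (hn : 0 < n1) (k : ℕ) : (A hn (n1 + k) : GVert n1 n2 n3) = A hn k :=
  A_eq hn (by rw [Nat.add_mod_left])

lemma distB2 (hn : 0 < n1) (m l : Fin n2) (h : (m:ℕ) ≤ (l:ℕ)) :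
    (GGraph n1 n2 n3).dist (.b m) (.b l) ≤ (l:ℕ) - (m:ℕ) := by
  have hl := l.isLt
  have hd := distB (n2:=n2) (n3:=n3) hn ((l:ℕ)-(m:ℕ)) (m:ℕ) (by omega)
  have e1 : (GVert.b (n1:=n1) (n3:=n3) ⟨(m:ℕ), by omega⟩) = .b m := by
    simp
  have e2 : (GVert.b (n1:=n1) (n3:=n3) ⟨(m:ℕ)+((l:ℕ)-(m:ℕ)), by omega⟩) = .b l := by
    simp only [GVert.b.injEq]
    apply Fin.ext
    simp only []
    omega
  rwa [e1, e2] at hd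

lemma dist_c (h1 : 5 ≤ n1) (h2 : 1 ≤ n2) :
    ∀ u : GVert n1 n2 n3, (GGraph n1 n2 n3).dist u .c = fc n1 n2 n3 u := by
  have hn : 0 < n1 := by omega
  have h1' : 2 ≤ n1 := by omega
  have hco := conn (n2:=n2) (n3:=n3) h1' hn
  have lower : ∀ u : GVert n1 n2 n3,
      fc n1 n2 n3 u ≤ (GGraph n1 n2 n3).dist u .c :=
    fun u => lip_lower _ (lipc h1) rfl (hco u .c)
  have e3 : (GGraph n1 n2 n3).dist (A hn (n1-1)) .c ≤ 1 := adj_dist_le (adjAC hn)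
  have eA0 : (GGraph n1 n2 n3).dist (A hn 0) (A hn (n1-1)) ≤ 1 := by
    have hd := distA (n2:=n2) (n3:=n3) h1' hn 1 (n1-1)
    rw [show n1-1+1 = n1 by omega, hA0 hn] at hd
    rw [SimpleGraph.dist_comm]
    exact hd
  have eA0c : (GGraph n1 n2 n3).dist (A hn 0) .c ≤ 2 := by
    have := hco.dist_triangle (u := A hn 0) (v := A hn (n1-1)) (w := GVert.c)
    omega
  have eic : (GGraph n1 n2 n3).dist .i .c ≤ 3 := by
    have t := hco.dist_triangle (u := GVert.i) (v := A hn 0) (w := GVert.c)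
    have e := adj_dist_le (adjAI (n2:=n2) (n3:=n3) hn)
    rw [SimpleGraph.dist_comm (u := A hn 0)] at e
    omega
  intro u
  refine le_antisymm ?_ (lower u)
  cases u with
  | a k =>
    have hk := k.isLt
    have e1 : (GGraph n1 n2 n3).dist (.a k) (A hn (n1-1)) ≤ n1-1-(k:ℕ) := by
      have hd := distA (n2:=n2) (n3:=n3) h1' hn (n1-1-(k:ℕ)) (k:ℕ)
      rw [show (k:ℕ) + (n1-1-(k:ℕ)) = n1-1 by omega] at hd
      rw [a_eq_A hn k]
      exact hd
    have e2 : (GGraph n1 n2 n3).dist (.a k) (A hn (n1-1)) ≤ (k:ℕ)+1 := by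
      have hd := distA (n2:=n2) (n3:=n3) h1' hn ((k:ℕ)+1) (n1-1)
      rw [show n1-1+((k:ℕ)+1) = n1+(k:ℕ) by omega, hAk hn] at hd
      rw [a_eq_A hn k, SimpleGraph.dist_comm]
      exact hd
    have t := hco.dist_triangle (u := GVert.a k) (v := A hn (n1-1)) (w := GVert.c)
    simp only [fc]
    omega
  | b m =>
    have hm := m.isLt
    have eb : (GGraph n1 n2 n3).dist (.b m) (.b ⟨0, by omega⟩) ≤ (m:ℕ) := by
      have := distB2 (n3:=n3) hn ⟨0, by omega⟩ m (by simp)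
      rw [SimpleGraph.dist_comm]
      simpa using this
    have e1 : (GGraph n1 n2 n3).dist (.b ⟨0, by omega⟩) (A hn 1) ≤ 1 := by
      rw [SimpleGraph.dist_comm]
      exact adj_dist_le (adjAB h1' hn (by omega))
    have e2 : (GGraph n1 n2 n3).dist (A hn 1) (A hn 0) ≤ 1 := by
      have hd := distA (n2:=n2) (n3:=n3) h1' hn 1 0
      rw [SimpleGraph.dist_comm]
      simpa using hd
    have t1 := hco.dist_triangle (u := GVert.b m) (v := .b ⟨0, by omega⟩) (w := A hn 1)
    have t2 := hco.dist_triangle (u := GVert.b m) (v := A hn 1) (w := A hn 0)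
    have t3 := hco.dist_triangle (u := GVert.b m) (v := A hn 0) (w := GVert.c)
    simp only [fc]
    omega
  | c => simp [SimpleGraph.dist_self, fc]
  | i => simpa [fc] using eic
  | j t =>
    have t1 := hco.dist_triangle (u := GVert.j t) (v := GVert.i) (w := GVert.c)
    have e := adj_dist_le (adjIJ (n1:=n1) (n2:=n2) t)
    rw [SimpleGraph.dist_comm] at e
    simp only [fc]
    omega

lemma dist_j (h1 : 5 ≤ n1) (h2 : 1 ≤ n2) {t0 : Fin n3} (ht0 : (t0:ℕ) = 0) :
    ∀ u : GVert n1 n2 n3, (GGraph n1 n2 n3).dist u (.j t0) = fj n1 n2 n3 u := by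
  have hn : 0 < n1 := by omega
  have h1' : 2 ≤ n1 := by omega
  have hco := conn (n2:=n2) (n3:=n3) h1' hn
  have lower : ∀ u : GVert n1 n2 n3,
      fj n1 n2 n3 u ≤ (GGraph n1 n2 n3).dist u (.j t0) :=
    fun u => lip_lower _ (lipj h1) (by simp [fj, ht0]) (hco u (.j t0))
  have eij : (GGraph n1 n2 n3).dist .i (.j t0) ≤ 1 := adj_dist_le (adjIJ t0)
  have eA0i : (GGraph n1 n2 n3).dist (A hn 0) .i ≤ 1 := adj_dist_le (adjAI hn)
  have eA0j : (GGraph n1 n2 n3).dist (A hn 0) (.j t0) ≤ 2 := by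
    have := hco.dist_triangle (u := A hn 0) (v := GVert.i) (w := GVert.j t0)
    omega
  intro u
  refine le_antisymm ?_ (lower u)
  cases u with
  | a k =>
    have hk := k.isLt
    have e1 : (GGraph n1 n2 n3).dist (.a k) (A hn 0) ≤ n1-(k:ℕ) := by
      have hd := distA (n2:=n2) (n3:=n3) h1' hn (n1-(k:ℕ)) (k:ℕ)
      rw [show (k:ℕ) + (n1-(k:ℕ)) = n1 by omega, hA0 hn] at hd
      rw [a_eq_A hn k]
      exact hd
    have e2 : (GGraph n1 n2 n3).dist (.a k) (A hn 0) ≤ (k:ℕ) := by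
      have hd := distA (n2:=n2) (n3:=n3) h1' hn (k:ℕ) 0
      rw [show 0+(k:ℕ) = (k:ℕ) by omega] at hd
      rw [a_eq_A hn k, SimpleGraph.dist_comm]
      exact hd
    have t := hco.dist_triangle (u := GVert.a k) (v := A hn 0) (w := GVert.j t0)
    simp only [fj]
    omega
  | b m =>
    have hm := m.isLt
    have eb : (GGraph n1 n2 n3).dist (.b m) (.b ⟨0, by omega⟩) ≤ (m:ℕ) := by
      have := distB2 (n3:=n3) hn ⟨0, by omega⟩ m (by simp)
      rw [SimpleGraph.dist_comm]
      simpa using this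
    have e1 : (GGraph n1 n2 n3).dist (.b ⟨0, by omega⟩) (A hn 1) ≤ 1 := by
      rw [SimpleGraph.dist_comm]
      exact adj_dist_le (adjAB h1' hn (by omega))
    have e2 : (GGraph n1 n2 n3).dist (A hn 1) (A hn 0) ≤ 1 := by
      have hd := distA (n2:=n2) (n3:=n3) h1' hn 1 0
      rw [SimpleGraph.dist_comm]
      simpa using hd
    have t1 := hco.dist_triangle (u := GVert.b m) (v := .b ⟨0, by omega⟩) (w := A hn 1)
    have t2 := hco.dist_triangle (u := GVert.b m) (v := A hn 1) (w := A hn 0)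
    have t3 := hco.dist_triangle (u := GVert.b m) (v := A hn 0) (w := GVert.j t0)
    simp only [fj]
    omega
  | c =>
    have e1 : (GGraph n1 n2 n3).dist .c (A hn (n1-1)) ≤ 1 := by
      rw [SimpleGraph.dist_comm]
      exact adj_dist_le (adjAC hn)
    have e2 : (GGraph n1 n2 n3).dist (A hn (n1-1)) (A hn 0) ≤ 1 := by
      have hd := distA (n2:=n2) (n3:=n3) h1' hn 1 (n1-1)
      rw [show n1-1+1 = n1 by omega, hA0 hn] at hd
      exact hd
    have t1 := hco.dist_triangle (u := GVert.c) (v := A hn (n1-1)) (w := A hn 0)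
    have t2 := hco.dist_triangle (u := GVert.c) (v := A hn 0) (w := GVert.j t0)
    simp only [fj]
    omega
  | i => simpa [fj] using eij
  | j t =>
    by_cases ht : (t:ℕ) = 0
    · have : t = t0 := Fin.ext (by omega)
      simp [this, SimpleGraph.dist_self, fj, ht]
    · have e1 : (GGraph n1 n2 n3).dist (.j t) .i ≤ 1 := by
        rw [SimpleGraph.dist_comm]
        exact adj_dist_le (adjIJ t)
      have t1 := hco.dist_triangle (u := GVert.j t) (v := GVert.i) (w := GVert.j t0)
      simp only [fj, if_neg ht]
      omega

lemma dist_bl (h1 : 5 ≤ n1) (h2 : 1 ≤ n2) {mL : Fin n2} (hmL : (mL:ℕ) = n2-1) :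
    (∀ m : Fin n2, (GGraph n1 n2 n3).dist (.b m) (.b mL) = (n2-1) - (m:ℕ)) ∧
    (∀ k : Fin n1, n2 ≤ (GGraph n1 n2 n3).dist (.a k) (.b mL)) := by
  have hn : 0 < n1 := by omega
  have h1' : 2 ≤ n1 := by omega
  have hco := conn (n2:=n2) (n3:=n3) h1' hn
  have lower : ∀ u : GVert n1 n2 n3,
      fb n1 n2 n3 u ≤ (GGraph n1 n2 n3).dist u (.b mL) :=
    fun u => lip_lower _ (lipb h1 h2) (by simp [fb, hmL]) (hco u (.b mL))
  constructor
  · intro m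
    have hm := m.isLt
    refine le_antisymm ?_ ?_
    · have := distB2 (n3:=n3) hn m mL (by omega)
      omega
    · have := lower (.b m)
      simpa [fb] using this
  · intro k
    have := lower (.a k)
    simpa [fb] using this

end exact

end GAux

/-- Lemma 2 (vertex part): `dim(G_{n1,n2,n3}) ≤ n3 + 1`. -/
theorem metricDim_GGraph_upper (n1 n2 n3 : ℕ) (h1 : 5 ≤ n1) (h2 : 1 ≤ n2) (h3 : 2 ≤ n3) :
    metricDim (GGraph n1 n2 n3) ≤ n3 + 1 := by
  classical
  have hn : 0 < n1 := by omega
  have h1' : 2 ≤ n1 := by omega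
  have hco := GAux.conn (n1:=n1) (n2:=n2) (n3:=n3) h1' hn
  have hmLlt : n2 - 1 < n2 := by omega
  have h0n3 : 0 < n3 := by omega
  set mL : Fin n2 := ⟨n2-1, hmLlt⟩ with hmLdef
  set t0 : Fin n3 := ⟨0, h0n3⟩ with ht0def
  have hmL : (mL:ℕ) = n2-1 := rfl
  have ht0 : (t0:ℕ) = 0 := rfl
  have hdc := GAux.dist_c (n3:=n3) h1 h2
  have hdj := GAux.dist_j (n2:=n2) h1 h2 ht0
  obtain ⟨hb1, hb2⟩ := GAux.dist_bl (n3:=n3) h1 h2 hmL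
  have hpos : ∀ u v : GVert n1 n2 n3, u ≠ v → (GGraph n1 n2 n3).dist u v ≠ 0 :=
    fun u v h => (hco.pos_dist_of_ne h).ne'
  let J : Finset (GVert n1 n2 n3) :=
    Finset.image (fun s : Fin (n3-1) => GVert.j ⟨(s:ℕ), by omega⟩) Finset.univ
  let T : Finset (GVert n1 n2 n3) := insert GVert.c (insert (GVert.b mL) J)
  have hcard : T.card = n3 + 1 := by
    have hinj : Function.Injective (fun s : Fin (n3-1) => (GVert.j ⟨(s:ℕ), by omega⟩ : GVert n1 n2 n3)) := by
      intro s s' h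
      simp only [GVert.j.injEq, Fin.mk.injEq] at h
      exact Fin.ext h
    have hJ : J.card = n3 - 1 := by
      rw [Finset.card_image_of_injective _ hinj, Finset.card_univ, Fintype.card_fin]
    have hbJ : GVert.b (n1:=n1) (n3:=n3) mL ∉ J := by simp [J]
    have hcT : GVert.c (n1:=n1) (n2:=n2) (n3:=n3) ∉ insert (GVert.b mL) J := by simp [J]
    rw [Finset.card_insert_of_notMem hcT, Finset.card_insert_of_notMem hbJ, hJ]
    omega
  have hcm : GVert.c ∈ (↑T : Set (GVert n1 n2 n3)) := by simp [T]
  have hbm : GVert.b mL ∈ (↑T : Set (GVert n1 n2 n3)) := by simp [T]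
  have hjm : ∀ t : Fin n3, (t:ℕ) < n3 - 1 → GVert.j t ∈ (↑T : Set (GVert n1 n2 n3)) := by
    intro t ht
    simp only [T, J, Finset.coe_insert, Set.mem_insert_iff, Finset.coe_image,
      Finset.coe_univ, Set.image_univ, Set.mem_range]
    right; right
    exact ⟨⟨(t:ℕ), ht⟩, by simp⟩
  have hj0 : GVert.j t0 ∈ (↑T : Set (GVert n1 n2 n3)) := hjm t0 (by omega)
  apply Nat.sInf_le
  refine ⟨(↑T : Set (GVert n1 n2 n3)), T.finite_toSet, ?_, by rw [Set.ncard_coe_finset, hcard]⟩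
  have flip : ∀ {x y : GVert n1 n2 n3},
      (∃ z ∈ (↑T : Set (GVert n1 n2 n3)), (GGraph n1 n2 n3).dist x z ≠ (GGraph n1 n2 n3).dist y z) →
      (∃ z ∈ (↑T : Set (GVert n1 n2 n3)), (GGraph n1 n2 n3).dist y z ≠ (GGraph n1 n2 n3).dist x z) := by
    rintro x y ⟨z, hz, h⟩
    exact ⟨z, hz, h.symm⟩
  have Hab : ∀ (k : Fin n1) (m : Fin n2), ∃ z ∈ (↑T : Set (GVert n1 n2 n3)),
      (GGraph n1 n2 n3).dist (.a k) z ≠ (GGraph n1 n2 n3).dist (.b m) z := by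
    intro k m
    refine ⟨.b mL, hbm, ?_⟩
    rw [hb1 m]
    have := hb2 k
    have := m.isLt
    omega
  have Hac : ∀ (k : Fin n1), ∃ z ∈ (↑T : Set (GVert n1 n2 n3)),
      (GGraph n1 n2 n3).dist (.a k) z ≠ (GGraph n1 n2 n3).dist .c z := by
    intro k
    refine ⟨.c, hcm, ?_⟩
    rw [hdc, hdc]
    simp only [GAux.fc]
    omega
  have Hai : ∀ (k : Fin n1), ∃ z ∈ (↑T : Set (GVert n1 n2 n3)),
      (GGraph n1 n2 n3).dist (.a k) z ≠ (GGraph n1 n2 n3).dist .i z := by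
    intro k
    refine ⟨.j t0, hj0, ?_⟩
    rw [hdj, hdj]
    simp only [GAux.fj]
    omega
  have Haj : ∀ (k : Fin n1) (t : Fin n3), ∃ z ∈ (↑T : Set (GVert n1 n2 n3)),
      (GGraph n1 n2 n3).dist (.a k) z ≠ (GGraph n1 n2 n3).dist (.j t) z := by
    intro k t
    by_cases hk : (k:ℕ) = 0
    · refine ⟨.c, hcm, ?_⟩
      rw [hdc, hdc]
      simp only [GAux.fc]
      omega
    · refine ⟨.j t0, hj0, ?_⟩
      rw [hdj, hdj]
      simp only [GAux.fj]
      have := k.isLt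
      split <;> omega
  have Hbc : ∀ (m : Fin n2), ∃ z ∈ (↑T : Set (GVert n1 n2 n3)),
      (GGraph n1 n2 n3).dist (.b m) z ≠ (GGraph n1 n2 n3).dist .c z := by
    intro m
    refine ⟨.c, hcm, ?_⟩
    rw [hdc, hdc]
    simp only [GAux.fc]
    omega
  have Hbi : ∀ (m : Fin n2), ∃ z ∈ (↑T : Set (GVert n1 n2 n3)),
      (GGraph n1 n2 n3).dist (.b m) z ≠ (GGraph n1 n2 n3).dist .i z := by
    intro m
    refine ⟨.j t0, hj0, ?_⟩
    rw [hdj, hdj]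
    simp only [GAux.fj]
    omega
  have Hbj : ∀ (m : Fin n2) (t : Fin n3), ∃ z ∈ (↑T : Set (GVert n1 n2 n3)),
      (GGraph n1 n2 n3).dist (.b m) z ≠ (GGraph n1 n2 n3).dist (.j t) z := by
    intro m t
    refine ⟨.j t0, hj0, ?_⟩
    rw [hdj, hdj]
    simp only [GAux.fj]
    split <;> omega
  have Hci : ∃ z ∈ (↑T : Set (GVert n1 n2 n3)),
      (GGraph n1 n2 n3).dist .c z ≠ (GGraph n1 n2 n3).dist .i z := by
    refine ⟨.c, hcm, ?_⟩
    rw [hdc, hdc]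
    simp only [GAux.fc]
    omega
  have Hcj : ∀ (t : Fin n3), ∃ z ∈ (↑T : Set (GVert n1 n2 n3)),
      (GGraph n1 n2 n3).dist .c z ≠ (GGraph n1 n2 n3).dist (.j t) z := by
    intro t
    refine ⟨.c, hcm, ?_⟩
    rw [hdc, hdc]
    simp only [GAux.fc]
    omega
  have Hij : ∀ (t : Fin n3), ∃ z ∈ (↑T : Set (GVert n1 n2 n3)),
      (GGraph n1 n2 n3).dist .i z ≠ (GGraph n1 n2 n3).dist (.j t) z := by
    intro t
    refine ⟨.j t0, hj0, ?_⟩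
    rw [hdj, hdj]
    simp only [GAux.fj]
    split <;> omega
  intro u v hne
  cases u with
  | a k =>
    cases v with
    | a l =>
      have hkl : (k:ℕ) ≠ (l:ℕ) := fun hh => hne (by rw [show k = l from Fin.ext hh])
      have hk := k.isLt
      have hl := l.isLt
      by_cases hc : min ((k:ℕ)+1) (n1-1-(k:ℕ)) = min ((l:ℕ)+1) (n1-1-(l:ℕ))
      · refine ⟨.j t0, hj0, ?_⟩
        rw [hdj, hdj]
        simp only [GAux.fj]
        omega
      · refine ⟨.c, hcm, ?_⟩
        rw [hdc, hdc]
        simp only [GAux.fc]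
        omega
    | b m => exact Hab k m
    | c => exact Hac k
    | i => exact Hai k
    | j t => exact Haj k t
  | b m =>
    cases v with
    | a k => exact flip (Hab k m)
    | b m' =>
      have hmm : (m:ℕ) ≠ (m':ℕ) := fun hh => hne (by rw [show m = m' from Fin.ext hh])
      refine ⟨.b mL, hbm, ?_⟩
      rw [hb1, hb1]
      have := m.isLt
      have := m'.isLt
      omega
    | c => exact Hbc m
    | i => exact Hbi m
    | j t => exact Hbj m t
  | c =>
    cases v with
    | a k => exact flip (Hac k)
    | b m => exact flip (Hbc m)
    | c => exact absurd rfl hne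
    | i => exact Hci
    | j t => exact Hcj t
  | i =>
    cases v with
    | a k => exact flip (Hai k)
    | b m => exact flip (Hbi m)
    | c => exact flip Hci
    | i => exact absurd rfl hne
    | j t => exact Hij t
  | j t =>
    cases v with
    | a k => exact flip (Haj k t)
    | b m => exact flip (Hbj m t)
    | c => exact flip (Hcj t)
    | i => exact flip (Hij t)
    | j t' =>
      have htt : (t:ℕ) ≠ (t':ℕ) := fun hh => hne (by rw [show t = t' from Fin.ext hh])
      have ht := t.isLt
      have ht' := t'.isLt
      by_cases hlt : (t:ℕ) < n3 - 1
      · refine ⟨.j t, hjm t hlt, ?_⟩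
        rw [SimpleGraph.dist_self]
        exact (hpos (.j t') (.j t) (fun he => htt (by injection he with h; rw [h]))).symm
      · have hlt' : (t':ℕ) < n3 - 1 := by omega
        refine ⟨.j t', hjm t' hlt', ?_⟩
        rw [SimpleGraph.dist_self]
        exact hpos (.j t) (.j t') hne
end

section
/- Let n1 ≥ 5, n2 ≥ 1 and n3 ≥ 2. Then the edge metric dimension of G_{n1,n2,n3} satisfies edim(G_{n1,n2,n3}) ≤ n3 + 1. -/
section AuxGG

private lemma succ_mod_cases {k l n : ℕ} (hk : k < n) (h : l = (k+1) % n) :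
    (l = k+1 ∧ k+1 < n) ∨ (l = 0 ∧ k+1 = n) := by
  rcases Nat.lt_or_ge (k+1) n with hh|hh
  · exact .inl ⟨by rw [h, Nat.mod_eq_of_lt hh], hh⟩
  · have h2 : k + 1 = n := by omega
    exact .inr ⟨by rw [h, h2, Nat.mod_self], h2⟩

private lemma level_le_walk {V : Type*} {G : SimpleGraph V} (f : V → ℕ)
    (hlip : ∀ u v, G.Adj u v → f u ≤ f v + 1) {w z : V} (q : G.Walk w z) :
    f w ≤ q.length + f z := by
  induction q with
  | nil => simp
  | @cons x y _ hadj q ih =>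
    have := hlip x y hadj
    simp only [SimpleGraph.Walk.length_cons]
    omega

private lemma dist_eq_of_level {V : Type*} {G : SimpleGraph V} {z : V} (f : V → ℕ)
    (hz : f z = 0)
    (hdes : ∀ u, u ≠ z → ∃ v, G.Adj u v ∧ f v + 1 = f u)
    (hlip : ∀ u v, G.Adj u v → f u ≤ f v + 1) (u : V) :
    G.dist u z = f u := by
  have hwalk : ∀ n u, f u = n → ∃ p : G.Walk u z, p.length = f u := by
    intro n
    induction n using Nat.strong_induction_on with
    | _ n ih =>
      intro u hu
      by_cases huz : u = z
      · subst huz; exact ⟨.nil, by simp [hz]⟩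
      · obtain ⟨v, hadj, hv⟩ := hdes u huz
        obtain ⟨p, hp⟩ := ih (f v) (by omega) v rfl
        exact ⟨.cons hadj p, by simp [hp]; omega⟩
  obtain ⟨p, hp⟩ := hwalk (f u) u rfl
  have hub := G.dist_le p
  obtain ⟨q, hq⟩ :=
    SimpleGraph.Reachable.exists_walk_length_eq_dist (⟨p⟩ : G.Reachable u z)
  have := level_le_walk f hlip q
  have hz0 := hz
  omega

private lemma cycle_key {n1 k l k' l' : ℕ} (h1 : 5 ≤ n1) (hkk : k ≠ k')
    (c1 : (l = k+1 ∧ k+1 < n1) ∨ (l = 0 ∧ k+1 = n1))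
    (c2 : (l' = k'+1 ∧ k'+1 < n1) ∨ (l' = 0 ∧ k'+1 = n1)) :
    min (1 + min k (n1 - k) + 1) (1 + min l (n1 - l) + 1) ≠
      min (1 + min k' (n1 - k') + 1) (1 + min l' (n1 - l') + 1) ∨
    min (1 + min (k+1) (n1 - 1 - k)) (1 + min (l+1) (n1 - 1 - l)) ≠
      min (1 + min (k'+1) (n1 - 1 - k')) (1 + min (l'+1) (n1 - 1 - l')) := by
  have norm1 : ∀ a : ℕ, a + 1 < n1 →
      min (1 + min a (n1 - a) + 1) (1 + min (a+1) (n1 - (a+1)) + 1)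
        = 2 + min a (n1 - 1 - a) := by intro a ha; omega
  have norm2 : ∀ a : ℕ, a + 1 < n1 →
      min (1 + min (a+1) (n1 - 1 - a)) (1 + min (a+1+1) (n1 - 1 - (a+1)))
        = 1 + min (a+1) (n1 - 2 - a) := by intro a ha; omega
  rcases c1 with ⟨rfl, hc1⟩ | ⟨rfl, hc1⟩ <;> rcases c2 with ⟨rfl, hc2⟩ | ⟨rfl, hc2⟩
  · rw [norm1 k hc1, norm1 k' hc2, norm2 k hc1, norm2 k' hc2]
    omega
  · rw [norm1 k hc1, norm2 k hc1]
    omega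
  · rw [norm1 k' hc2, norm2 k' hc2]
    omega
  · omega

end AuxGG
deriving instance DecidableEq for GVert

namespace GGAux

variable {n1 n2 n3 : ℕ}

def Dc : GVert n1 n2 n3 → ℕ
  | .a k => 1 + min ((k : ℕ) + 1) (n1 - 1 - (k : ℕ))
  | .b m => (m : ℕ) + 4
  | .c => 0
  | .i => 3
  | .j _ => 4

def Di : GVert n1 n2 n3 → ℕ
  | .a k => 1 + min (k : ℕ) (n1 - (k : ℕ))
  | .b m => (m : ℕ) + 3
  | .c => 3
  | .i => 0
  | .j _ => 1

def Db : GVert n1 n2 n3 → ℕ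
  | .a k => n2 + (if (k : ℕ) = 0 then 1 else min ((k : ℕ) - 1) (n1 + 1 - (k : ℕ)))
  | .b m => n2 - 1 - (m : ℕ)
  | .c => n2 + 3
  | .i => n2 + 2
  | .j _ => n2 + 3

def Dj (s : Fin n3) (x : GVert n1 n2 n3) : ℕ := if x = .j s then 0 else Di x + 1

lemma dj_self (s : Fin n3) : Dj s (GVert.j s : GVert n1 n2 n3) = 0 := if_pos rfl

lemma dj_ne {s : Fin n3} {x : GVert n1 n2 n3} (h : x ≠ .j s) : Dj s x = Di x + 1 := if_neg h

lemma adj_iff {x y : GVert n1 n2 n3} :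
    (GGraph n1 n2 n3).Adj x y ↔ x ≠ y ∧ (GRel n1 n2 n3 x y ∨ GRel n1 n2 n3 y x) :=
  SimpleGraph.fromRel_adj _ _ _

lemma adj_aa (h1 : 5 ≤ n1) {k l : Fin n1} (h : (l : ℕ) = ((k : ℕ) + 1) % n1) :
    (GGraph n1 n2 n3).Adj (.a k) (.a l) := by
  rw [adj_iff]
  refine ⟨fun heq => ?_, .inl h⟩
  have hk := k.isLt
  obtain rfl : k = l := by injection heq
  rcases succ_mod_cases hk h with ⟨h', h''⟩ | ⟨h', h''⟩ <;> omega

lemma adj_aa' (h1 : 5 ≤ n1) {k l : Fin n1}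
    (h : (l : ℕ) = (k : ℕ) + 1 ∨ ((l : ℕ) = 0 ∧ (k : ℕ) + 1 = n1)) :
    (GGraph n1 n2 n3).Adj (.a k) (.a l) := by
  apply adj_aa h1
  rcases h with h | ⟨h0, hn⟩
  · have hlt : (k : ℕ) + 1 < n1 := h ▸ l.isLt
    rw [h, Nat.mod_eq_of_lt hlt]
  · rw [h0, hn, Nat.mod_self]

lemma adj_ab {k : Fin n1} {m : Fin n2} (hk : (k : ℕ) = 1) (hm : (m : ℕ) = 0) :
    (GGraph n1 n2 n3).Adj (.a k) (.b m) := by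
  rw [adj_iff]
  exact ⟨fun h => by injection h, .inl ⟨hk, hm⟩⟩

lemma adj_bb {m m' : Fin n2} (h : (m' : ℕ) = (m : ℕ) + 1) :
    (GGraph n1 n2 n3).Adj (.b m) (.b m') := by
  rw [adj_iff]
  refine ⟨fun heq => ?_, .inl h⟩
  obtain rfl : m = m' := by injection heq
  omega

lemma adj_ac {k : Fin n1} (hk : (k : ℕ) = n1 - 1) :
    (GGraph n1 n2 n3).Adj (.a k) .c := by
  rw [adj_iff]
  exact ⟨fun h => by injection h, .inl hk⟩

lemma adj_ai {k : Fin n1} (hk : (k : ℕ) = 0) :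
    (GGraph n1 n2 n3).Adj (.a k) .i := by
  rw [adj_iff]
  exact ⟨fun h => by injection h, .inl hk⟩

lemma adj_ij (t : Fin n3) : (GGraph n1 n2 n3).Adj .i (.j t) := by
  rw [adj_iff]
  exact ⟨fun h => by injection h, .inl trivial⟩

lemma eq_i_of_adj_j {x : GVert n1 n2 n3} {t : Fin n3}
    (h : (GGraph n1 n2 n3).Adj x (.j t)) : x = .i := by
  rw [adj_iff] at h
  obtain ⟨-, h | h⟩ := h <;> rcases x with k | m | _ | _ | t' <;>
    simp only [GRel] at h <;> first | rfl | exact h.elim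

end GGAux
namespace GGAux

variable {n1 n2 n3 : ℕ}

lemma key_rel_c (h1 : 5 ≤ n1) : ∀ u v : GVert n1 n2 n3, GRel n1 n2 n3 u v →
    Dc u ≤ Dc v + 1 ∧ Dc v ≤ Dc u + 1 := by
  intro u v h
  rcases u with k | m | _ | _ | t <;> rcases v with k' | m' | _ | _ | t' <;>
      simp only [GRel] at h <;> simp only [Dc] <;> try exact h.elim
  · have hk := k.isLt; have hk' := k'.isLt
    rcases succ_mod_cases hk h with ⟨h', h''⟩ | ⟨h', h''⟩ <;> omega
  · obtain ⟨hk, hm⟩ := h; omega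
  · omega
  · have hk := k.isLt; omega
  · omega
  · omega

lemma key_rel_i (h1 : 5 ≤ n1) : ∀ u v : GVert n1 n2 n3, GRel n1 n2 n3 u v →
    Di u ≤ Di v + 1 ∧ Di v ≤ Di u + 1 := by
  intro u v h
  rcases u with k | m | _ | _ | t <;> rcases v with k' | m' | _ | _ | t' <;>
      simp only [GRel] at h <;> simp only [Di] <;> try exact h.elim
  · have hk := k.isLt; have hk' := k'.isLt
    rcases succ_mod_cases hk h with ⟨h', h''⟩ | ⟨h', h''⟩ <;> omega
  · obtain ⟨hk, hm⟩ := h; omega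
  · omega
  · have hk := k.isLt; omega
  · omega
  · omega

lemma key_rel_b (h1 : 5 ≤ n1) : ∀ u v : GVert n1 n2 n3, GRel n1 n2 n3 u v →
    Db (n1 := n1) (n3 := n3) u ≤ Db v + 1 ∧ Db v ≤ Db u + 1 := by
  intro u v h
  rcases u with k | m | _ | _ | t <;> rcases v with k' | m' | _ | _ | t' <;>
      simp only [GRel] at h <;> simp only [Db] <;> try exact h.elim
  · have hk := k.isLt; have hk' := k'.isLt
    rcases succ_mod_cases hk h with ⟨h', h''⟩ | ⟨h', h''⟩ <;> split_ifs <;> first | exact ‹False›.elim | omega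
  · obtain ⟨hk, hm⟩ := h; split_ifs <;> first | exact ‹False›.elim | omega
  · have hk := k.isLt; split_ifs <;> first | exact ‹False›.elim | omega
  · split_ifs <;> first | exact ‹False›.elim | omega
  · omega
  · omega

lemma lip_c (h1 : 5 ≤ n1) :
    ∀ u v : GVert n1 n2 n3, (GGraph n1 n2 n3).Adj u v → Dc u ≤ Dc v + 1 := by
  intro u v h
  rw [adj_iff] at h
  rcases h.2 with h' | h'
  exacts [(key_rel_c h1 u v h').1, (key_rel_c h1 v u h').2]

lemma lip_i (h1 : 5 ≤ n1) :
    ∀ u v : GVert n1 n2 n3, (GGraph n1 n2 n3).Adj u v → Di u ≤ Di v + 1 := by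
  intro u v h
  rw [adj_iff] at h
  rcases h.2 with h' | h'
  exacts [(key_rel_i h1 u v h').1, (key_rel_i h1 v u h').2]

lemma lip_b (h1 : 5 ≤ n1) :
    ∀ u v : GVert n1 n2 n3, (GGraph n1 n2 n3).Adj u v → Db u ≤ Db v + 1 := by
  intro u v h
  rw [adj_iff] at h
  rcases h.2 with h' | h'
  exacts [(key_rel_b h1 u v h').1, (key_rel_b h1 v u h').2]

lemma lip_j (h1 : 5 ≤ n1) (s : Fin n3) :
    ∀ u v : GVert n1 n2 n3, (GGraph n1 n2 n3).Adj u v → Dj s u ≤ Dj s v + 1 := by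
  intro u v h
  by_cases hu : u = GVert.j s
  · subst hu; simp [dj_self]
  · by_cases hv : v = GVert.j s
    · subst hv
      have := eq_i_of_adj_j h
      subst this
      simp [dj_self, dj_ne (show (GVert.i : GVert n1 n2 n3) ≠ .j s by intro hh; injection hh), Di]
    · rw [dj_ne hu, dj_ne hv]
      have := lip_i h1 u v h
      omega

end GGAux
namespace GGAux

variable {n1 n2 n3 : ℕ}

lemma val_mk1 {x : ℕ} (hx : x < n1) : ((⟨x, hx⟩ : Fin n1) : ℕ) = x := rfl
lemma val_mk2 {x : ℕ} (hx : x < n2) : ((⟨x, hx⟩ : Fin n2) : ℕ) = x := rfl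

lemma des_c (h1 : 5 ≤ n1) (h2 : 1 ≤ n2) :
    ∀ u : GVert n1 n2 n3, u ≠ .c →
      ∃ v, (GGraph n1 n2 n3).Adj u v ∧ Dc v + 1 = Dc u := by
  intro u hu
  rcases u with k | m | _ | _ | t
  · have hk := k.isLt
    by_cases hk1 : (k : ℕ) = n1 - 1
    · exact ⟨.c, adj_ac hk1, by simp only [Dc]; omega⟩
    · by_cases hk0 : (k : ℕ) = 0
      · refine ⟨.a ⟨n1 - 1, by omega⟩, ((adj_aa' h1 ?_).symm), ?_⟩
        · exact .inr ⟨hk0, by simp only [val_mk1]; omega⟩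
        · simp only [Dc, val_mk1]; omega
      · by_cases hside : (k : ℕ) + 1 ≤ n1 - 1 - (k : ℕ)
        · refine ⟨.a ⟨(k : ℕ) - 1, by omega⟩, ((adj_aa' h1 ?_).symm), ?_⟩
          · exact .inl (by simp only [val_mk1]; omega)
          · simp only [Dc, val_mk1]; omega
        · refine ⟨.a ⟨(k : ℕ) + 1, by omega⟩, adj_aa' h1 ?_, ?_⟩
          · exact .inl (by simp only [val_mk1])
          · simp only [Dc, val_mk1]; omega
  · by_cases hm0 : (m : ℕ) = 0
    · refine ⟨.a ⟨1, by omega⟩, (adj_ab (by simp only [val_mk1]) hm0).symm, ?_⟩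
      simp only [Dc, val_mk1]; omega
    · refine ⟨.b ⟨(m : ℕ) - 1, by omega⟩, (adj_bb (by simp only [val_mk2]; omega)).symm, ?_⟩
      simp only [Dc, val_mk2]; omega
  · exact absurd rfl hu
  · refine ⟨.a ⟨0, by omega⟩, (adj_ai (by simp only [val_mk1])).symm, ?_⟩
    simp only [Dc, val_mk1]; omega
  · exact ⟨.i, (adj_ij t).symm, by simp only [Dc]⟩

lemma des_i (h1 : 5 ≤ n1) (h2 : 1 ≤ n2) :
    ∀ u : GVert n1 n2 n3, u ≠ .i →
      ∃ v, (GGraph n1 n2 n3).Adj u v ∧ Di v + 1 = Di u ∧ ∀ t : Fin n3, v ≠ .j t := by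
  intro u hu
  rcases u with k | m | _ | _ | t
  · have hk := k.isLt
    by_cases hk0 : (k : ℕ) = 0
    · exact ⟨.i, adj_ai hk0, by simp only [Di]; omega, fun t h => by injection h⟩
    · by_cases hside : (k : ℕ) ≤ n1 - (k : ℕ)
      · refine ⟨.a ⟨(k : ℕ) - 1, by omega⟩, ((adj_aa' h1 ?_).symm), ?_, fun t h => by injection h⟩
        · exact .inl (by simp only [val_mk1]; omega)
        · simp only [Di, val_mk1]; omega
      · by_cases hk1 : (k : ℕ) = n1 - 1
        · refine ⟨.a ⟨0, by omega⟩, adj_aa' h1 ?_, ?_, fun t h => by injection h⟩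
          · exact .inr ⟨by simp only [val_mk1], by omega⟩
          · simp only [Di, val_mk1]; omega
        · refine ⟨.a ⟨(k : ℕ) + 1, by omega⟩, adj_aa' h1 ?_, ?_, fun t h => by injection h⟩
          · exact .inl (by simp only [val_mk1])
          · simp only [Di, val_mk1]; omega
  · by_cases hm0 : (m : ℕ) = 0
    · refine ⟨.a ⟨1, by omega⟩, (adj_ab (by simp only [val_mk1]) hm0).symm, ?_, fun t h => by injection h⟩
      simp only [Di, val_mk1]; omega
    · refine ⟨.b ⟨(m : ℕ) - 1, by omega⟩, (adj_bb (by simp only [val_mk2]; omega)).symm, ?_,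
        fun t h => by injection h⟩
      simp only [Di, val_mk2]; omega
  · refine ⟨.a ⟨n1 - 1, by omega⟩, (adj_ac (by simp only [val_mk1])).symm, ?_, fun t h => by injection h⟩
    simp only [Di, val_mk1]; omega
  · exact absurd rfl hu
  · exact ⟨.i, (adj_ij t).symm, by simp only [Di], fun t h => by injection h⟩

lemma des_b (h1 : 5 ≤ n1) (h2 : 1 ≤ n2) (hb : n2 - 1 < n2) :
    ∀ u : GVert n1 n2 n3, u ≠ .b ⟨n2 - 1, hb⟩ →
      ∃ v, (GGraph n1 n2 n3).Adj u v ∧ Db v + 1 = Db u := by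
  intro u hu
  rcases u with k | m | _ | _ | t
  · have hk := k.isLt
    by_cases hk0 : (k : ℕ) = 0
    · refine ⟨.a ⟨1, by omega⟩, adj_aa' h1 (.inl (by simp only [val_mk1]; omega)), ?_⟩
      simp only [Db, val_mk1]
      split_ifs <;> first | exact ‹False›.elim | omega
    · by_cases hk1 : (k : ℕ) = 1
      · refine ⟨.b ⟨0, h2⟩, (adj_ab hk1 (by simp only [val_mk2])), ?_⟩
        simp only [Db, val_mk2]
        split_ifs <;> first | exact ‹False›.elim | omega
      · by_cases hside : (k : ℕ) - 1 ≤ n1 + 1 - (k : ℕ)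
        · refine ⟨.a ⟨(k : ℕ) - 1, by omega⟩, ((adj_aa' h1 (.inl (by simp only [val_mk1]; omega))).symm), ?_⟩
          simp only [Db, val_mk1]
          split_ifs <;> first | exact ‹False›.elim | omega
        · by_cases hklast : (k : ℕ) = n1 - 1
          · refine ⟨.a ⟨0, by omega⟩, adj_aa' h1 (.inr ⟨by simp only [val_mk1], by omega⟩), ?_⟩
            simp only [Db, val_mk1]
            split_ifs <;> first | exact ‹False›.elim | omega
          · refine ⟨.a ⟨(k : ℕ) + 1, by omega⟩, adj_aa' h1 (.inl (by simp only [val_mk1])), ?_⟩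
            simp only [Db, val_mk1]
            split_ifs <;> first | exact ‹False›.elim | omega
  · have hm := m.isLt
    have hmne : (m : ℕ) ≠ n2 - 1 := by
      intro hh
      exact hu (by congr 1; exact Fin.ext hh)
    refine ⟨.b ⟨(m : ℕ) + 1, by omega⟩, adj_bb (by simp only [val_mk2]), ?_⟩
    simp only [Db, val_mk2]; omega
  · refine ⟨.a ⟨n1 - 1, by omega⟩, (adj_ac (by simp only [val_mk1])).symm, ?_⟩
    simp only [Db, val_mk1]
    split_ifs <;> first | exact ‹False›.elim | omega
  · refine ⟨.a ⟨0, by omega⟩, (adj_ai (by simp only [val_mk1])).symm, ?_⟩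
    simp only [Db, val_mk1]
    split_ifs <;> first | exact ‹False›.elim | omega
  · exact ⟨.i, (adj_ij t).symm, by simp only [Db]⟩

lemma des_j (h1 : 5 ≤ n1) (h2 : 1 ≤ n2) (s : Fin n3) :
    ∀ u : GVert n1 n2 n3, u ≠ .j s →
      ∃ v, (GGraph n1 n2 n3).Adj u v ∧ Dj s v + 1 = Dj s u := by
  intro u hu
  by_cases hi : u = GVert.i
  · subst hi
    refine ⟨.j s, adj_ij s, ?_⟩
    rw [dj_self, dj_ne (show (GVert.i : GVert n1 n2 n3) ≠ .j s from fun h => by injection h)]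
    simp only [Di]
  · obtain ⟨v, hadj, hv, hnoj⟩ := des_i h1 h2 u hi
    refine ⟨v, hadj, ?_⟩
    rw [dj_ne (hnoj s), dj_ne hu]
    omega

lemma dist_c (h1 : 5 ≤ n1) (h2 : 1 ≤ n2) (x : GVert n1 n2 n3) :
    (GGraph n1 n2 n3).dist x .c = Dc x :=
  dist_eq_of_level Dc (by simp only [Dc]) (des_c h1 h2) (lip_c h1) x

lemma dist_b (h1 : 5 ≤ n1) (h2 : 1 ≤ n2) (hb : n2 - 1 < n2) (x : GVert n1 n2 n3) :
    (GGraph n1 n2 n3).dist x (.b ⟨n2 - 1, hb⟩) = Db x :=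
  dist_eq_of_level Db (by simp only [Db, val_mk2]; omega) (des_b h1 h2 hb) (lip_b h1) x

lemma dist_j (h1 : 5 ≤ n1) (h2 : 1 ≤ n2) (s : Fin n3) (x : GVert n1 n2 n3) :
    (GGraph n1 n2 n3).dist x (.j s) = Dj s x :=
  dist_eq_of_level (Dj s) (dj_self s) (des_j h1 h2 s) (lip_j h1 s) x

end GGAux
namespace GGAux

variable {n1 n2 n3 : ℕ}

lemma edge_shape (e : Sym2 (GVert n1 n2 n3)) (he : e ∈ (GGraph n1 n2 n3).edgeSet) :
    (∃ k l : Fin n1, e = s(.a k, .a l) ∧ (l : ℕ) = ((k : ℕ) + 1) % n1) ∨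
    (∃ m m' : Fin n2, e = s(.b m, .b m') ∧ (m' : ℕ) = (m : ℕ) + 1) ∨
    (∃ (k : Fin n1) (m : Fin n2), e = s(.a k, .b m) ∧ (k : ℕ) = 1 ∧ (m : ℕ) = 0) ∨
    (∃ k : Fin n1, e = s(.a k, GVert.c) ∧ (k : ℕ) = n1 - 1) ∨
    (∃ k : Fin n1, e = s(.a k, GVert.i) ∧ (k : ℕ) = 0) ∨
    (∃ t : Fin n3, e = s(GVert.i, GVert.j t)) := by
  induction e with
  | _ x y =>
    rw [SimpleGraph.mem_edgeSet, adj_iff] at he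
    obtain ⟨-, h | h⟩ := he
    · rcases x with k | m | _ | _ | t <;> rcases y with k' | m' | _ | _ | t' <;>
        simp only [GRel] at h <;> try exact h.elim
      · exact .inl ⟨k, k', rfl, h⟩
      · exact .inr (.inr (.inl ⟨k, m', rfl, h.1, h.2⟩))
      · exact .inr (.inr (.inr (.inl ⟨k, rfl, h⟩)))
      · exact .inr (.inr (.inr (.inr (.inl ⟨k, rfl, h⟩))))
      · exact .inr (.inl ⟨m, m', rfl, h⟩)
      · exact .inr (.inr (.inr (.inr (.inr ⟨t', rfl⟩))))
    · rcases x with k | m | _ | _ | t <;> rcases y with k' | m' | _ | _ | t' <;>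
        simp only [GRel] at h <;> try exact h.elim
      · exact .inl ⟨k', k, Sym2.eq_swap, h⟩
      · exact .inr (.inr (.inl ⟨k', m, Sym2.eq_swap, h.1, h.2⟩))
      · exact .inr (.inl ⟨m', m, Sym2.eq_swap, h⟩)
      · exact .inr (.inr (.inr (.inl ⟨k', Sym2.eq_swap, h⟩)))
      · exact .inr (.inr (.inr (.inr (.inl ⟨k', Sym2.eq_swap, h⟩))))
      · exact .inr (.inr (.inr (.inr (.inr ⟨t, Sym2.eq_swap⟩))))

end GGAux
set_option maxHeartbeats 1000000 in
/-- Lemma 2 (edge part): `edim(G_{n1,n2,n3}) ≤ n3 + 1`. -/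
theorem edgeMetricDim_GGraph_upper (n1 n2 n3 : ℕ) (h1 : 5 ≤ n1) (h2 : 1 ≤ n2) (h3 : 2 ≤ n3) :
    edgeMetricDim (GGraph n1 n2 n3) ≤ n3 + 1 := by
  classical
  open GGAux in
  have hb : n2 - 1 < n2 := by omega
  set G := GGraph n1 n2 n3 with hG
  set zb : GVert n1 n2 n3 := .b ⟨n2 - 1, hb⟩ with hzb
  set j0 : Fin n3 := ⟨0, by omega⟩ with hj0
  set F : Finset (GVert n1 n2 n3) :=
    insert GVert.c (insert zb
      ((Finset.univ.filter (fun s : Fin n3 => (s : ℕ) < n3 - 1)).image GVert.j)) with hF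
  have hjinj : Function.Injective (GVert.j : Fin n3 → GVert n1 n2 n3) :=
    fun x y h => by injection h
  -- cardinality
  have hcard : F.card = n3 + 1 := by
    have hfil : (Finset.univ.filter (fun s : Fin n3 => (s : ℕ) < n3 - 1))
        = Finset.Iio (⟨n3 - 1, by omega⟩ : Fin n3) := by
      ext s
      simp [Fin.lt_def]
    rw [hF, Finset.card_insert_of_notMem (by simp [hzb]),
      Finset.card_insert_of_notMem (by simp [hzb]),
      Finset.card_image_of_injective _ hjinj, hfil, Fin.card_Iio]
    show n3 - 1 + 1 + 1 = n3 + 1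
    omega
  -- membership helpers
  have mC : GVert.c ∈ (↑F : Set (GVert n1 n2 n3)) := by simp [hF]
  have mB : zb ∈ (↑F : Set (GVert n1 n2 n3)) := by simp [hF]
  have mJ : ∀ s : Fin n3, (s : ℕ) < n3 - 1 → GVert.j s ∈ (↑F : Set (GVert n1 n2 n3)) := by
    intro s hs
    simp only [hF, Finset.coe_insert, Set.mem_insert_iff, Finset.coe_image, Set.mem_image,
      Finset.mem_coe, Finset.mem_filter, Finset.mem_univ, true_and]
    exact .inr (.inr ⟨s, hs, rfl⟩)
  have mJ0 : GVert.j j0 ∈ (↑F : Set (GVert n1 n2 n3)) :=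
    mJ j0 (by rw [hj0]; show 0 < n3 - 1; omega)
  -- edge-distance computation helpers
  have EC : ∀ u v : GVert n1 n2 n3, edgeDist G s(u, v) GVert.c = min (Dc u) (Dc v) := by
    intro u v
    simp only [edgeDist, Sym2.lift_mk, hG]
    rw [dist_c h1 h2, dist_c h1 h2]
  have EB : ∀ u v : GVert n1 n2 n3, edgeDist G s(u, v) zb = min (Db u) (Db v) := by
    intro u v
    simp only [edgeDist, Sym2.lift_mk, hG, hzb]
    rw [dist_b h1 h2 hb, dist_b h1 h2 hb]
  have EJ : ∀ (s : Fin n3) (u v : GVert n1 n2 n3),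
      edgeDist G s(u, v) (.j s) = min (Dj s u) (Dj s v) := by
    intro s u v
    simp only [edgeDist, Sym2.lift_mk, hG]
    rw [dist_j h1 h2, dist_j h1 h2]
  have nja : ∀ (k : Fin n1) (s : Fin n3), (GVert.a k : GVert n1 n2 n3) ≠ .j s :=
    fun _ _ h => by injection h
  have njb : ∀ (m : Fin n2) (s : Fin n3), (GVert.b m : GVert n1 n2 n3) ≠ .j s :=
    fun _ _ h => by injection h
  have njc : ∀ s : Fin n3, (GVert.c : GVert n1 n2 n3) ≠ .j s := fun _ h => by injection h
  have nji : ∀ s : Fin n3, (GVert.i : GVert n1 n2 n3) ≠ .j s := fun _ h => by injection h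
  have EJ' : ∀ (s : Fin n3) (u v : GVert n1 n2 n3), u ≠ .j s → v ≠ .j s →
      edgeDist G s(u, v) (.j s) = min (Di u + 1) (Di v + 1) := by
    intro s u v hu hv
    rw [EJ, dj_ne hu, dj_ne hv]
  have EJI : ∀ s t : Fin n3, edgeDist G s(GVert.i, GVert.j t) (.j s) ≤ 1 := by
    intro s t
    rw [EJ, dj_ne (nji s)]
    exact le_trans (min_le_left _ _) (by simp [Di])
  -- the generator property
  have hgen : IsEdgeMetricGenerator G ↑F := by
    intro e he f hf hne
    rcases edge_shape e he with ⟨k, l, rfl, hl⟩ | ⟨m, m1, rfl, hm1⟩ | ⟨k, m, rfl, hk, hm⟩ |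
      ⟨k, rfl, hk⟩ | ⟨k, rfl, hk⟩ | ⟨t, rfl⟩ <;>
      rcases edge_shape f hf with ⟨k', l', rfl, hl'⟩ | ⟨m', m1', rfl, hm1'⟩ |
        ⟨k', m', rfl, hk', hm'⟩ | ⟨k', rfl, hk'⟩ | ⟨k', rfl, hk'⟩ | ⟨t', rfl⟩
    -- (1,1) cycle vs cycle
    · have hkk : (k : ℕ) ≠ (k' : ℕ) := by
        intro hh
        apply hne
        obtain rfl : k = k' := Fin.ext hh
        obtain rfl : l = l' := Fin.ext (hl.trans hl'.symm)
        rfl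
      have c1 := succ_mod_cases k.isLt hl
      have c2 := succ_mod_cases k'.isLt hl'
      have key := cycle_key h1 hkk c1 c2
      rcases key with key | key
      · refine ⟨.j j0, mJ0, ?_⟩
        rw [EJ' j0 _ _ (nja k j0) (nja l j0), EJ' j0 _ _ (nja k' j0) (nja l' j0)]
        simp only [Di]
        exact key
      · refine ⟨.c, mC, ?_⟩
        rw [EC, EC]
        simp only [Dc]
        exact key
    -- (1,2)
    · refine ⟨zb, mB, ?_⟩
      rw [EB, EB]
      simp only [Db]
      split_ifs <;> omega
    -- (1,3)
    · refine ⟨zb, mB, ?_⟩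
      rw [EB, EB]
      simp only [Db]
      split_ifs <;> omega
    -- (1,4)
    · refine ⟨.c, mC, ?_⟩
      rw [EC, EC]
      simp only [Dc]
      omega
    -- (1,5)
    · refine ⟨.j j0, mJ0, ?_⟩
      rw [EJ' j0 _ _ (nja k j0) (nja l j0), EJ' j0 _ _ (nja k' j0) (nji j0)]
      simp only [Di]
      omega
    -- (1,6)
    · refine ⟨.j j0, mJ0, ?_⟩
      have hle := EJI j0 t'
      rw [EJ' j0 _ _ (nja k j0) (nja l j0)]
      simp only [Di]
      omega
    -- (2,1)
    · refine ⟨zb, mB, ?_⟩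
      rw [EB, EB]
      simp only [Db]
      split_ifs <;> omega
    -- (2,2)
    · have hmm : (m : ℕ) ≠ (m' : ℕ) := by
        intro hh
        apply hne
        obtain rfl : m = m' := Fin.ext hh
        obtain rfl : m1 = m1' := Fin.ext (hm1.trans hm1'.symm)
        rfl
      refine ⟨zb, mB, ?_⟩
      rw [EB, EB]
      simp only [Db]
      omega
    -- (2,3)
    · refine ⟨zb, mB, ?_⟩
      rw [EB, EB]
      simp only [Db]
      split_ifs <;> omega
    -- (2,4)
    · refine ⟨.c, mC, ?_⟩
      rw [EC, EC]
      simp only [Dc]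
      omega
    -- (2,5)
    · refine ⟨.j j0, mJ0, ?_⟩
      rw [EJ' j0 _ _ (njb m j0) (njb m1 j0), EJ' j0 _ _ (nja k' j0) (nji j0)]
      simp only [Di]
      omega
    -- (2,6)
    · refine ⟨.j j0, mJ0, ?_⟩
      have hle := EJI j0 t'
      rw [EJ' j0 _ _ (njb m j0) (njb m1 j0)]
      simp only [Di]
      omega
    -- (3,1)
    · refine ⟨zb, mB, ?_⟩
      rw [EB, EB]
      simp only [Db]
      split_ifs <;> omega
    -- (3,2)
    · refine ⟨zb, mB, ?_⟩
      rw [EB, EB]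
      simp only [Db]
      split_ifs <;> omega
    -- (3,3)
    · exfalso
      apply hne
      obtain rfl : k = k' := Fin.ext (hk.trans hk'.symm)
      obtain rfl : m = m' := Fin.ext (hm.trans hm'.symm)
      rfl
    -- (3,4)
    · refine ⟨.c, mC, ?_⟩
      rw [EC, EC]
      simp only [Dc]
      omega
    -- (3,5)
    · refine ⟨.j j0, mJ0, ?_⟩
      rw [EJ' j0 _ _ (nja k j0) (njb m j0), EJ' j0 _ _ (nja k' j0) (nji j0)]
      simp only [Di]
      omega
    -- (3,6)
    · refine ⟨.j j0, mJ0, ?_⟩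
      have hle := EJI j0 t'
      rw [EJ' j0 _ _ (nja k j0) (njb m j0)]
      simp only [Di]
      omega
    -- (4,1)
    · refine ⟨.c, mC, ?_⟩
      rw [EC, EC]
      simp only [Dc]
      omega
    -- (4,2)
    · refine ⟨.c, mC, ?_⟩
      rw [EC, EC]
      simp only [Dc]
      omega
    -- (4,3)
    · refine ⟨.c, mC, ?_⟩
      rw [EC, EC]
      simp only [Dc]
      omega
    -- (4,4)
    · exfalso
      apply hne
      obtain rfl : k = k' := Fin.ext (hk.trans hk'.symm)
      rfl
    -- (4,5)
    · refine ⟨.c, mC, ?_⟩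
      rw [EC, EC]
      simp only [Dc]
      omega
    -- (4,6)
    · refine ⟨.c, mC, ?_⟩
      rw [EC, EC]
      simp only [Dc]
      omega
    -- (5,1)
    · refine ⟨.j j0, mJ0, ?_⟩
      rw [EJ' j0 _ _ (nja k j0) (nji j0), EJ' j0 _ _ (nja k' j0) (nja l' j0)]
      simp only [Di]
      omega
    -- (5,2)
    · refine ⟨.j j0, mJ0, ?_⟩
      rw [EJ' j0 _ _ (nja k j0) (nji j0), EJ' j0 _ _ (njb m' j0) (njb m1' j0)]
      simp only [Di]
      omega
    -- (5,3)
    · refine ⟨.j j0, mJ0, ?_⟩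
      rw [EJ' j0 _ _ (nja k j0) (nji j0), EJ' j0 _ _ (nja k' j0) (njb m' j0)]
      simp only [Di]
      omega
    -- (5,4)
    · refine ⟨.c, mC, ?_⟩
      rw [EC, EC]
      simp only [Dc]
      omega
    -- (5,5)
    · exfalso
      apply hne
      obtain rfl : k = k' := Fin.ext (hk.trans hk'.symm)
      rfl
    -- (5,6)
    · refine ⟨.c, mC, ?_⟩
      rw [EC, EC]
      simp only [Dc]
      omega
    -- (6,1)
    · refine ⟨.j j0, mJ0, ?_⟩
      have hle := EJI j0 t
      rw [EJ' j0 _ _ (nja k' j0) (nja l' j0)]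
      simp only [Di]
      omega
    -- (6,2)
    · refine ⟨.j j0, mJ0, ?_⟩
      have hle := EJI j0 t
      rw [EJ' j0 _ _ (njb m' j0) (njb m1' j0)]
      simp only [Di]
      omega
    -- (6,3)
    · refine ⟨.j j0, mJ0, ?_⟩
      have hle := EJI j0 t
      rw [EJ' j0 _ _ (nja k' j0) (njb m' j0)]
      simp only [Di]
      omega
    -- (6,4)
    · refine ⟨.c, mC, ?_⟩
      rw [EC, EC]
      simp only [Dc]
      omega
    -- (6,5)
    · refine ⟨.c, mC, ?_⟩
      rw [EC, EC]
      simp only [Dc]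
      omega
    -- (6,6)
    · have htt : t ≠ t' := by
        rintro rfl
        exact hne rfl
      by_cases ht : (t : ℕ) < n3 - 1
      · refine ⟨.j t, mJ t ht, ?_⟩
        rw [EJ, EJ, dj_self, dj_ne (nji t), dj_ne (fun h => htt (hjinj h).symm)]
        simp only [Di]
        omega
      · have ht' : (t' : ℕ) < n3 - 1 := by
          have h5 := t.isLt
          have h6 := t'.isLt
          have : (t : ℕ) ≠ (t' : ℕ) := fun hh => htt (Fin.ext hh)
          omega
        refine ⟨.j t', mJ t' ht', ?_⟩
        rw [EJ, EJ, dj_self, dj_ne (nji t'), dj_ne (fun h => htt (hjinj h))]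
        simp only [Di]
        omega
  exact Nat.sInf_le ⟨↑F, F.finite_toSet, hgen, by rw [Set.ncard_coe_finset, hcard]⟩
end

section
/- Let n1 ≥ 5 be odd, n2 ≥ 1 and n3 ≥ 2. Then the metric dimension of G_{n1,n2,n3} equals n3. -/
-- distance formulas
def pIdx (n1 : ℕ) : ℕ := (n1 - 1) / 2

def fI (n1 n2 n3 : ℕ) : GVert n1 n2 n3 → ℕ
  | .a k => 1 + min (k : ℕ) (n1 - (k : ℕ))
  | .b m => (m : ℕ) + 3
  | .c => 3
  | .i => 0
  | .j _ => 1

def fP (n1 n2 n3 : ℕ) : GVert n1 n2 n3 → ℕ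
  | .a k => max (k : ℕ) (pIdx n1) - min (k : ℕ) (pIdx n1)
  | .b m => (m : ℕ) + pIdx n1
  | .c => pIdx n1 + 1
  | .i => pIdx n1 + 1
  | .j _ => pIdx n1 + 2

def fJ (n1 n2 n3 : ℕ) (t : Fin n3) : GVert n1 n2 n3 → ℕ
  | .j s => if s = t then 0 else 2
  | u => fI n1 n2 n3 u + 1

variable {n1 n2 n3 : ℕ}

lemma adj_iff (u v : GVert n1 n2 n3) :
    (GGraph n1 n2 n3).Adj u v ↔ u ≠ v ∧ (GRel n1 n2 n3 u v ∨ GRel n1 n2 n3 v u) := by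
  simp [GGraph, SimpleGraph.fromRel_adj]

lemma adj_aa (x : ℕ) (h : x + 1 < n1) :
    (GGraph n1 n2 n3).Adj (.a ⟨x, by omega⟩) (.a ⟨x + 1, h⟩) := by
  rw [adj_iff]
  refine ⟨by simp [Fin.ext_iff], Or.inl ?_⟩
  show (x + 1 : ℕ) = (x + 1) % n1
  rw [Nat.mod_eq_of_lt h]

lemma adj_wrap (h5 : 2 ≤ n1) :
    (GGraph n1 n2 n3).Adj (.a ⟨n1 - 1, by omega⟩) (.a ⟨0, by omega⟩) := by
  rw [adj_iff]
  refine ⟨by simp [Fin.ext_iff]; omega, Or.inl ?_⟩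
  show (0 : ℕ) = (n1 - 1 + 1) % n1
  have : n1 - 1 + 1 = n1 := by omega
  rw [this, Nat.mod_self]

lemma adj_ab (ha : 1 < n1) (hb : 0 < n2) :
    (GGraph n1 n2 n3).Adj (.a ⟨1, ha⟩) (.b ⟨0, hb⟩) := by
  rw [adj_iff]
  exact ⟨by simp, Or.inl ⟨rfl, rfl⟩⟩

lemma adj_bb (x : ℕ) (h : x + 1 < n2) :
    (GGraph n1 n2 n3).Adj (.b ⟨x, by omega⟩) (.b ⟨x + 1, h⟩) := by
  rw [adj_iff]
  exact ⟨by simp [Fin.ext_iff], Or.inl rfl⟩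

lemma adj_ac (h : 0 < n1) :
    (GGraph n1 n2 n3).Adj (.a ⟨n1 - 1, by omega⟩) .c := by
  rw [adj_iff]
  exact ⟨by simp, Or.inl rfl⟩

lemma adj_ai (h : 0 < n1) :
    (GGraph n1 n2 n3).Adj (.a ⟨0, h⟩) .i := by
  rw [adj_iff]
  exact ⟨by simp, Or.inl rfl⟩

lemma adj_ij (t : Fin n3) :
    (GGraph n1 n2 n3).Adj .i (.j t) := by
  rw [adj_iff]
  exact ⟨by simp, Or.inl trivial⟩

/-- `RWalk u v d`: there is a walk from `u` to `v` of length at most `d`. -/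
def RWalk (n1 n2 n3 : ℕ) (u v : GVert n1 n2 n3) (d : ℕ) : Prop :=
  ∃ w : (GGraph n1 n2 n3).Walk u v, w.length ≤ d

lemma RWalk.dist_le {u v : GVert n1 n2 n3} {d : ℕ} (h : RWalk n1 n2 n3 u v d) :
    (GGraph n1 n2 n3).dist u v ≤ d := by
  obtain ⟨w, hw⟩ := h
  exact le_trans (SimpleGraph.dist_le w) hw

lemma RWalk.reachable {u v : GVert n1 n2 n3} {d : ℕ} (h : RWalk n1 n2 n3 u v d) :
    (GGraph n1 n2 n3).Reachable u v := by
  obtain ⟨w, _⟩ := h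
  exact ⟨w⟩

lemma RWalk_refl (u : GVert n1 n2 n3) : RWalk n1 n2 n3 u u 0 := ⟨.nil, le_rfl⟩

lemma RWalk_of_adj {u v : GVert n1 n2 n3} (h : (GGraph n1 n2 n3).Adj u v) :
    RWalk n1 n2 n3 u v 1 := ⟨h.toWalk, by simp⟩

lemma RWalk_trans {u v w : GVert n1 n2 n3} {d e : ℕ}
    (h1 : RWalk n1 n2 n3 u v d) (h2 : RWalk n1 n2 n3 v w e) : RWalk n1 n2 n3 u w (d + e) := by
  obtain ⟨w1, hw1⟩ := h1
  obtain ⟨w2, hw2⟩ := h2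
  exact ⟨w1.append w2, by rw [SimpleGraph.Walk.length_append]; omega⟩

lemma RWalk_symm {u v : GVert n1 n2 n3} {d : ℕ} (h : RWalk n1 n2 n3 u v d) :
    RWalk n1 n2 n3 v u d := by
  obtain ⟨w, hw⟩ := h
  exact ⟨w.reverse, by rw [SimpleGraph.Walk.length_reverse]; exact hw⟩

lemma RWalk_mono {u v : GVert n1 n2 n3} {d e : ℕ} (h : RWalk n1 n2 n3 u v d) (hde : d ≤ e) :
    RWalk n1 n2 n3 u v e := by
  obtain ⟨w, hw⟩ := h
  exact ⟨w, le_trans hw hde⟩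

lemma RWalk_aa_down : ∀ (d x y : ℕ) (hx : x < n1) (hy : y < n1), x = y + d →
    RWalk n1 n2 n3 (.a ⟨x, hx⟩) (.a ⟨y, hy⟩) d := by
  intro d
  induction d with
  | zero =>
    intro x y hx hy h
    have : x = y := by omega
    subst this
    exact RWalk_refl _
  | succ d ih =>
    intro x y hx hy h
    subst h
    have hadj := adj_aa (n1 := n1) (n2 := n2) (n3 := n3) (y + d) (by omega)
    have h1 : RWalk n1 n2 n3 (.a ⟨y + d + 1, hx⟩) (.a ⟨y + d, by omega⟩) 1 :=
      RWalk_symm (RWalk_of_adj hadj)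
    have h2 := ih (y + d) y (by omega) hy rfl
    exact RWalk_mono (RWalk_trans h1 h2) (by omega)

lemma RWalk_bb_down : ∀ (d x y : ℕ) (hx : x < n2) (hy : y < n2), x = y + d →
    RWalk n1 n2 n3 (.b ⟨x, hx⟩) (.b ⟨y, hy⟩) d := by
  intro d
  induction d with
  | zero =>
    intro x y hx hy h
    have : x = y := by omega
    subst this
    exact RWalk_refl _
  | succ d ih =>
    intro x y hx hy h
    subst h
    have hadj := adj_bb (n1 := n1) (n2 := n2) (n3 := n3) (y + d) (by omega)
    have h1 : RWalk n1 n2 n3 (.b ⟨y + d + 1, hx⟩) (.b ⟨y + d, by omega⟩) 1 :=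
      RWalk_symm (RWalk_of_adj hadj)
    have h2 := ih (y + d) y (by omega) hy rfl
    exact RWalk_mono (RWalk_trans h1 h2) (by omega)

lemma RWalk_a0 (h5 : 5 ≤ n1) (x : ℕ) (hx : x < n1) :
    RWalk n1 n2 n3 (.a ⟨x, hx⟩) (.a ⟨0, by omega⟩) (min x (n1 - x)) := by
  rcases le_total x (n1 - x) with h | h
  · exact RWalk_mono (RWalk_aa_down x x 0 hx (by omega) (by omega)) (by omega)
  · have h1 : RWalk n1 n2 n3 (.a ⟨n1 - 1, by omega⟩) (.a ⟨x, hx⟩) (n1 - 1 - x) :=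
      RWalk_aa_down (n1 - 1 - x) (n1 - 1) x (by omega) hx (by omega)
    have h3 : RWalk n1 n2 n3 (.a ⟨n1 - 1, by omega⟩) (.a ⟨0, by omega⟩) 1 :=
      RWalk_of_adj (adj_wrap (by omega))
    exact RWalk_mono (RWalk_trans (RWalk_symm h1) h3) (by omega)

lemma RWalk_to_i (h5 : 5 ≤ n1) (h2 : 1 ≤ n2) (u : GVert n1 n2 n3) :
    RWalk n1 n2 n3 u .i (fI n1 n2 n3 u) := by
  have hai : RWalk n1 n2 n3 (.a ⟨0, by omega⟩) .i 1 := RWalk_of_adj (adj_ai (by omega))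
  have haux : ∀ (x : ℕ) (hx : x < n1),
      RWalk n1 n2 n3 (.a ⟨x, hx⟩) .i (1 + min x (n1 - x)) := by
    intro x hx
    exact RWalk_mono (RWalk_trans (RWalk_a0 h5 x hx) hai) (by omega)
  cases u with
  | a k =>
    have := haux (k : ℕ) k.isLt
    simpa [fI] using this
  | b m =>
    have hb0 : RWalk n1 n2 n3 (.b ⟨(m : ℕ), m.isLt⟩) (.b ⟨0, by omega⟩) (m : ℕ) :=
      RWalk_bb_down (m : ℕ) (m : ℕ) 0 m.isLt (by omega) (by omega)
    have hba : RWalk n1 n2 n3 (.b ⟨0, by omega⟩) (.a ⟨1, by omega⟩) 1 :=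
      RWalk_symm (RWalk_of_adj (adj_ab (by omega) (by omega)))
    have ha := haux 1 (by omega)
    exact RWalk_mono (RWalk_trans (RWalk_trans hb0 hba) ha) (by simp only [fI]; omega)
  | c =>
    have hca : RWalk n1 n2 n3 .c (.a ⟨n1 - 1, by omega⟩) 1 :=
      RWalk_symm (RWalk_of_adj (adj_ac (by omega)))
    have ha := haux (n1 - 1) (by omega)
    exact RWalk_mono (RWalk_trans hca ha) (by simp only [fI]; omega)
  | i => exact RWalk_refl _
  | j t =>
    have := RWalk_symm (RWalk_of_adj (adj_ij (n1 := n1) (n2 := n2) t))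
    simpa [fI] using this

lemma RWalk_ap (h5 : 5 ≤ n1) (x : ℕ) (hx : x < n1) :
    RWalk n1 n2 n3 (.a ⟨x, hx⟩) (.a ⟨pIdx n1, by simp [pIdx]; omega⟩)
      (max x (pIdx n1) - min x (pIdx n1)) := by
  have hp : pIdx n1 < n1 := by simp [pIdx]; omega
  rcases le_total (pIdx n1) x with h | h
  · exact RWalk_mono (RWalk_aa_down (x - pIdx n1) x (pIdx n1) hx hp (by omega)) (by omega)
  · exact RWalk_mono (RWalk_symm (RWalk_aa_down (pIdx n1 - x) (pIdx n1) x hp hx (by omega))) (by omega)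

lemma RWalk_to_p (h5 : 5 ≤ n1) (ho : n1 % 2 = 1) (h2 : 1 ≤ n2) (u : GVert n1 n2 n3) :
    RWalk n1 n2 n3 u (.a ⟨pIdx n1, by simp [pIdx]; omega⟩) (fP n1 n2 n3 u) := by
  have hp2 : 2 ≤ pIdx n1 := by simp [pIdx]; omega
  cases u with
  | a k =>
    have := RWalk_ap (n2 := n2) (n3 := n3) h5 (k : ℕ) k.isLt
    simpa only [fP] using this
  | b m =>
    have hb0 : RWalk n1 n2 n3 (.b ⟨(m : ℕ), m.isLt⟩) (.b ⟨0, by omega⟩) (m : ℕ) :=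
      RWalk_bb_down (m : ℕ) (m : ℕ) 0 m.isLt (by omega) (by omega)
    have hba : RWalk n1 n2 n3 (.b ⟨0, by omega⟩) (.a ⟨1, by omega⟩) 1 :=
      RWalk_symm (RWalk_of_adj (adj_ab (by omega) (by omega)))
    have ha := RWalk_ap (n2 := n2) (n3 := n3) h5 1 (by omega)
    exact RWalk_mono (RWalk_trans (RWalk_trans hb0 hba) ha) (by simp only [fP, pIdx]; omega)
  | c =>
    have hca : RWalk n1 n2 n3 .c (.a ⟨n1 - 1, by omega⟩) 1 :=
      RWalk_symm (RWalk_of_adj (adj_ac (by omega)))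
    have ha := RWalk_ap (n2 := n2) (n3 := n3) h5 (n1 - 1) (by omega)
    exact RWalk_mono (RWalk_trans hca ha) (by simp only [fP, pIdx]; omega)
  | i =>
    have hia : RWalk n1 n2 n3 .i (.a ⟨0, by omega⟩) 1 :=
      RWalk_symm (RWalk_of_adj (adj_ai (by omega)))
    have ha := RWalk_ap (n2 := n2) (n3 := n3) h5 0 (by omega)
    exact RWalk_mono (RWalk_trans hia ha) (by simp only [fP, pIdx]; omega)
  | j t =>
    have hji : RWalk n1 n2 n3 (.j t) .i 1 := RWalk_symm (RWalk_of_adj (adj_ij t))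
    have hia : RWalk n1 n2 n3 .i (.a ⟨0, by omega⟩) 1 :=
      RWalk_symm (RWalk_of_adj (adj_ai (by omega)))
    have ha := RWalk_ap (n2 := n2) (n3 := n3) h5 0 (by omega)
    exact RWalk_mono (RWalk_trans (RWalk_trans hji hia) ha) (by simp only [fP, pIdx]; omega)

lemma RWalk_to_j (h5 : 5 ≤ n1) (h2 : 1 ≤ n2) (t : Fin n3) (u : GVert n1 n2 n3) :
    RWalk n1 n2 n3 u (.j t) (fJ n1 n2 n3 t u) := by
  have hij : RWalk n1 n2 n3 .i (.j t) 1 := RWalk_of_adj (adj_ij t)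
  cases u with
  | j s =>
    by_cases h : s = t
    · subst h
      exact RWalk_mono (RWalk_refl _) (by simp [fJ])
    · have hji : RWalk n1 n2 n3 (.j s) .i 1 := RWalk_symm (RWalk_of_adj (adj_ij s))
      exact RWalk_mono (RWalk_trans hji hij) (by simp [fJ, h])
  | a k =>
    exact RWalk_mono (RWalk_trans (RWalk_to_i h5 h2 _) hij) (by simp [fJ, fI])
  | b m =>
    exact RWalk_mono (RWalk_trans (RWalk_to_i h5 h2 _) hij) (by simp [fJ, fI])
  | c =>
    exact RWalk_mono (RWalk_trans (RWalk_to_i h5 h2 _) hij) (by simp [fJ, fI])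
  | i =>
    exact RWalk_mono hij (by simp [fJ, fI])


/-- Generic lower bound for graph distance via a 1-Lipschitz potential. -/
lemma lip_le_dist {V : Type*} {G : SimpleGraph V} {f : V → ℕ} {z : V} (hz : f z = 0)
    (hlip : ∀ u v, G.Adj u v → f u ≤ f v + 1) {u : V} (hr : G.Reachable u z) :
    f u ≤ G.dist u z := by
  obtain ⟨w, hw⟩ := hr.exists_walk_length_eq_dist
  rw [← hw]
  clear hw hr
  induction w with
  | nil => simp [hz]
  | cons h w ih =>
    rw [SimpleGraph.Walk.length_cons]
    have := hlip _ _ h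
    omega

lemma mod_succ_cases {k l : ℕ} (hk : k < n1) (h : l = (k + 1) % n1) :
    (k + 1 < n1 ∧ l = k + 1) ∨ (k = n1 - 1 ∧ l = 0) := by
  rcases lt_or_ge (k + 1) n1 with hlt | hge
  · exact Or.inl ⟨hlt, by rw [h, Nat.mod_eq_of_lt hlt]⟩
  · right
    have hkn : k + 1 = n1 := by omega
    exact ⟨by omega, by rw [h, hkn, Nat.mod_self]⟩

lemma grel_cases (u v : GVert n1 n2 n3) (h : GRel n1 n2 n3 u v) :
    (∃ (k l : Fin n1), u = .a k ∧ v = .a l ∧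
        (((k:ℕ)+1 < n1 ∧ (l:ℕ) = (k:ℕ)+1) ∨ ((k:ℕ) = n1-1 ∧ (l:ℕ) = 0))) ∨
    (∃ (k : Fin n1) (m : Fin n2), u = .a k ∧ v = .b m ∧ (k:ℕ) = 1 ∧ (m:ℕ) = 0) ∨
    (∃ (m m' : Fin n2), u = .b m ∧ v = .b m' ∧ (m':ℕ) = (m:ℕ) + 1) ∨
    (∃ k : Fin n1, u = .a k ∧ v = .c ∧ (k:ℕ) = n1 - 1) ∨
    (∃ k : Fin n1, u = .a k ∧ v = .i ∧ (k:ℕ) = 0) ∨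
    (∃ t : Fin n3, u = .i ∧ v = .j t) := by
  cases u with
  | a k =>
    cases v with
    | a l => exact Or.inl ⟨k, l, rfl, rfl, mod_succ_cases k.isLt h⟩
    | b m => exact Or.inr (Or.inl ⟨k, m, rfl, rfl, h.1, h.2⟩)
    | c => exact Or.inr (Or.inr (Or.inr (Or.inl ⟨k, rfl, rfl, h⟩)))
    | i => exact Or.inr (Or.inr (Or.inr (Or.inr (Or.inl ⟨k, rfl, rfl, h⟩))))
    | j t => exact h.elim
  | b m =>
    cases v with
    | b m' => exact Or.inr (Or.inr (Or.inl ⟨m, m', rfl, rfl, h⟩))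
    | a _ => exact h.elim
    | c => exact h.elim
    | i => exact h.elim
    | j _ => exact h.elim
  | c => cases v <;> exact h.elim
  | i =>
    cases v with
    | j t => exact Or.inr (Or.inr (Or.inr (Or.inr (Or.inr ⟨t, rfl, rfl⟩))))
    | a _ => exact h.elim
    | b _ => exact h.elim
    | c => exact h.elim
    | i => exact h.elim
  | j s => cases v <;> exact h.elim

lemma grel_fI (h5 : 5 ≤ n1) (u v : GVert n1 n2 n3) (h : GRel n1 n2 n3 u v) :
    fI n1 n2 n3 u ≤ fI n1 n2 n3 v + 1 ∧ fI n1 n2 n3 v ≤ fI n1 n2 n3 u + 1 := by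
  rcases grel_cases u v h with
      ⟨k, l, rfl, rfl, hc⟩ | ⟨k, m, rfl, rfl, hk, hm⟩ | ⟨m, m', rfl, rfl, hm⟩ |
      ⟨k, rfl, rfl, hk⟩ | ⟨k, rfl, rfl, hk⟩ | ⟨t, rfl, rfl⟩ <;>
    simp only [fI] <;>
    [ (have hk := k.isLt; have hl := l.isLt; omega);
      omega; omega; omega; omega; omega ]

lemma grel_fP (h5 : 5 ≤ n1) (ho : n1 % 2 = 1) (u v : GVert n1 n2 n3)
    (h : GRel n1 n2 n3 u v) :
    fP n1 n2 n3 u ≤ fP n1 n2 n3 v + 1 ∧ fP n1 n2 n3 v ≤ fP n1 n2 n3 u + 1 := by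
  rcases grel_cases u v h with
      ⟨k, l, rfl, rfl, hc⟩ | ⟨k, m, rfl, rfl, hk, hm⟩ | ⟨m, m', rfl, rfl, hm⟩ |
      ⟨k, rfl, rfl, hk⟩ | ⟨k, rfl, rfl, hk⟩ | ⟨t, rfl, rfl⟩ <;>
    simp only [fP, pIdx] <;>
    [ (have hk := k.isLt; have hl := l.isLt; omega);
      omega; omega; omega; omega; omega ]

lemma lip_of_grel (f : GVert n1 n2 n3 → ℕ)
    (hg : ∀ u v, GRel n1 n2 n3 u v → f u ≤ f v + 1 ∧ f v ≤ f u + 1) :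
    ∀ u v, (GGraph n1 n2 n3).Adj u v → f u ≤ f v + 1 := by
  intro u v huv
  rw [adj_iff] at huv
  rcases huv.2 with h | h
  · exact (hg u v h).1
  · exact (hg v u h).2

theorem dist_to_i (h5 : 5 ≤ n1) (h2 : 1 ≤ n2) (u : GVert n1 n2 n3) :
    (GGraph n1 n2 n3).dist u .i = fI n1 n2 n3 u := by
  refine le_antisymm (RWalk_to_i h5 h2 u).dist_le ?_
  refine lip_le_dist ?_ (lip_of_grel _ (grel_fI h5)) (RWalk_to_i h5 h2 u).reachable
  rfl

theorem dist_to_p (h5 : 5 ≤ n1) (ho : n1 % 2 = 1) (h2 : 1 ≤ n2) (u : GVert n1 n2 n3) :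
    (GGraph n1 n2 n3).dist u (.a ⟨pIdx n1, by simp [pIdx]; omega⟩) = fP n1 n2 n3 u := by
  refine le_antisymm (RWalk_to_p h5 ho h2 u).dist_le ?_
  refine lip_le_dist ?_ (lip_of_grel _ (grel_fP h5 ho)) (RWalk_to_p h5 ho h2 u).reachable
  simp [fP]

lemma grel_fJ (h5 : 5 ≤ n1) (t : Fin n3) (u v : GVert n1 n2 n3)
    (h : GRel n1 n2 n3 u v) :
    fJ n1 n2 n3 t u ≤ fJ n1 n2 n3 t v + 1 ∧ fJ n1 n2 n3 t v ≤ fJ n1 n2 n3 t u + 1 := by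
  rcases grel_cases u v h with
      ⟨k, l, rfl, rfl, hc⟩ | ⟨k, m, rfl, rfl, hk, hm⟩ | ⟨m, m', rfl, rfl, hm⟩ |
      ⟨k, rfl, rfl, hk⟩ | ⟨k, rfl, rfl, hk⟩ | ⟨s, rfl, rfl⟩ <;>
    simp only [fJ, fI] <;>
    [ (have hk := k.isLt; have hl := l.isLt; omega);
      omega; omega; omega; omega; (split <;> omega) ]

theorem dist_to_j (h5 : 5 ≤ n1) (h2 : 1 ≤ n2) (t : Fin n3) (u : GVert n1 n2 n3) :
    (GGraph n1 n2 n3).dist u (.j t) = fJ n1 n2 n3 t u := by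
  refine le_antisymm (RWalk_to_j h5 h2 t u).dist_le ?_
  refine lip_le_dist ?_ (lip_of_grel _ (grel_fJ h5 t)) (RWalk_to_j h5 h2 t u).reachable
  simp [fJ]

lemma fJ_nonj (t : Fin n3) {u : GVert n1 n2 n3} (hu : ∀ s, u ≠ .j s) :
    fJ n1 n2 n3 t u = fI n1 n2 n3 u + 1 := by
  cases u with
  | j s => exact absurd rfl (hu s)
  | a k => rfl
  | b m => rfl
  | c => rfl
  | i => rfl

lemma fI_eq_one (h5 : 5 ≤ n1) {u : GVert n1 n2 n3} (hu : ∀ s, u ≠ .j s)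
    (h : fI n1 n2 n3 u = 1) : ∃ k : Fin n1, (k : ℕ) = 0 ∧ u = .a k := by
  cases u with
  | j s => exact absurd rfl (hu s)
  | a k =>
    have hk := k.isLt
    simp only [fI] at h
    exact ⟨k, by omega, rfl⟩
  | b m => simp only [fI] at h; omega
  | c => simp only [fI] at h; omega
  | i => simp only [fI] at h; omega

lemma key_inj (h5 : 5 ≤ n1) (ho : n1 % 2 = 1) {u v : GVert n1 n2 n3}
    (hu : ∀ s, u ≠ .j s) (hv : ∀ s, v ≠ .j s) (hne : u ≠ v) :
    fI n1 n2 n3 u ≠ fI n1 n2 n3 v ∨ fP n1 n2 n3 u ≠ fP n1 n2 n3 v := by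
  cases u with
  | j s => exact absurd rfl (hu s)
  | a k =>
    have hk := k.isLt
    cases v with
    | j s => exact absurd rfl (hv s)
    | a l =>
      have hl := l.isLt
      have hkl : (k : ℕ) ≠ (l : ℕ) := by simpa [Fin.ext_iff] using hne
      simp only [fI, fP, pIdx]; omega
    | b m => have hm := m.isLt; simp only [fI, fP, pIdx]; omega
    | c => simp only [fI, fP, pIdx]; omega
    | i => simp only [fI, fP, pIdx]; omega
  | b m =>
    have hm := m.isLt
    cases v with
    | j s => exact absurd rfl (hv s)
    | a l => have hl := l.isLt; simp only [fI, fP, pIdx]; omega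
    | b m' =>
      have hm' := m'.isLt
      have hne' : (m : ℕ) ≠ (m' : ℕ) := by simpa [Fin.ext_iff] using hne
      simp only [fI, fP, pIdx]; omega
    | c => simp only [fI, fP, pIdx]; omega
    | i => simp only [fI, fP, pIdx]; omega
  | c =>
    cases v with
    | j s => exact absurd rfl (hv s)
    | a l => have hl := l.isLt; simp only [fI, fP, pIdx]; omega
    | b m => have hm := m.isLt; simp only [fI, fP, pIdx]; omega
    | c => exact absurd rfl hne
    | i => simp only [fI, fP, pIdx]; omega
  | i =>
    cases v with
    | j s => exact absurd rfl (hv s)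
    | a l => have hl := l.isLt; simp only [fI, fP, pIdx]; omega
    | b m => have hm := m.isLt; simp only [fI, fP, pIdx]; omega
    | c => simp only [fI, fP, pIdx]; omega
    | i => exact absurd rfl hne

lemma upper_mem (h5 : 5 ≤ n1) (ho : n1 % 2 = 1) (h2 : 1 ≤ n2) (h3 : 2 ≤ n3) :
    ∃ S : Set (GVert n1 n2 n3),
      S.Finite ∧ IsMetricGenerator (GGraph n1 n2 n3) S ∧ S.ncard = n3 := by
  have hpn : pIdx n1 < n1 := by simp only [pIdx]; omega
  have hle : n3 - 1 ≤ n3 := by omega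
  refine ⟨insert (.a ⟨pIdx n1, hpn⟩)
      ((fun t : Fin (n3-1) => GVert.j (Fin.castLE hle t)) '' Set.univ), ?_, ?_, ?_⟩
  · exact (Set.finite_univ.image _).insert _
  · -- metric generator
    have hjmem : ∀ r : Fin n3, (r : ℕ) < n3 - 1 →
        GVert.j r ∈ insert (GVert.a (n2 := n2) (n3 := n3) ⟨pIdx n1, hpn⟩)
          ((fun t : Fin (n3-1) => GVert.j (Fin.castLE hle t)) '' Set.univ) := by
      intro r hr
      refine Set.mem_insert_of_mem _ ⟨⟨(r : ℕ), hr⟩, Set.mem_univ _, ?_⟩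
      exact congrArg GVert.j (Fin.ext rfl)
    have hpmem : GVert.a (n2 := n2) (n3 := n3) ⟨pIdx n1, hpn⟩ ∈ insert
          (GVert.a (n2 := n2) (n3 := n3) ⟨pIdx n1, hpn⟩)
          ((fun t : Fin (n3-1) => GVert.j (Fin.castLE hle t)) '' Set.univ) :=
      Set.mem_insert _ _
    obtain ⟨t0, ht0⟩ : ∃ t : Fin n3, (t : ℕ) = 0 := ⟨⟨0, by omega⟩, rfl⟩
    have ht0' : (t0 : ℕ) < n3 - 1 := by omega
    -- helper for (j, non-j) pairs
    have hjn : ∀ (s : Fin n3) (v : GVert n1 n2 n3), (∀ s', v ≠ .j s') →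
        ∃ z ∈ insert (GVert.a (n2 := n2) (n3 := n3) ⟨pIdx n1, hpn⟩)
          ((fun t : Fin (n3-1) => GVert.j (Fin.castLE hle t)) '' Set.univ),
          (GGraph n1 n2 n3).dist (.j s) z ≠ (GGraph n1 n2 n3).dist v z := by
      intro s v hv
      by_cases hd : fJ n1 n2 n3 t0 (.j s) = fI n1 n2 n3 v + 1
      · have hv1 : fI n1 n2 n3 v = 1 := by
          simp only [fJ] at hd
          by_cases hst : s = t0
          · rw [if_pos hst] at hd; omega
          · rw [if_neg hst] at hd; omega
        obtain ⟨k, hk0, hv0⟩ := fI_eq_one h5 hv hv1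
        refine ⟨_, hpmem, ?_⟩
        rw [hv0, dist_to_p h5 ho h2 (.j s), dist_to_p h5 ho h2 _]
        simp only [fP, pIdx]
        omega
      · refine ⟨.j t0, hjmem t0 ht0', ?_⟩
        rw [dist_to_j h5 h2 t0 (.j s), dist_to_j h5 h2 t0 v, fJ_nonj t0 hv]
        exact hd
    intro u v hne
    by_cases hju : ∃ s, u = GVert.j s
    · obtain ⟨s, rfl⟩ := hju
      by_cases hjv : ∃ s', v = GVert.j s'
      · obtain ⟨s', rfl⟩ := hjv
        have hss' : s ≠ s' := by rintro rfl; exact hne rfl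
        by_cases hs : (s : ℕ) < n3 - 1
        · refine ⟨.j s, hjmem s hs, ?_⟩
          rw [dist_to_j h5 h2 s (.j s), dist_to_j h5 h2 s (.j s')]
          simp [fJ, (Ne.symm hss' : s' ≠ s)]
        · have hs2 : (s' : ℕ) < n3 - 1 := by
            have := s.isLt; have := s'.isLt
            by_contra hcon
            exact hss' (Fin.ext (by omega))
          refine ⟨.j s', hjmem s' hs2, ?_⟩
          rw [dist_to_j h5 h2 s' (.j s), dist_to_j h5 h2 s' (.j s')]
          simp [fJ, hss']
      · exact hjn s v (fun s' h => hjv ⟨s', h⟩)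
    · have hu : ∀ s, u ≠ GVert.j s := fun s h => hju ⟨s, h⟩
      by_cases hjv : ∃ s', v = GVert.j s'
      · obtain ⟨s', rfl⟩ := hjv
        obtain ⟨z, hz1, hz2⟩ := hjn s' u hu
        exact ⟨z, hz1, hz2.symm⟩
      · have hv : ∀ s, v ≠ GVert.j s := fun s h => hjv ⟨s, h⟩
        rcases key_inj h5 ho hu hv hne with h | h
        · refine ⟨.j t0, hjmem t0 ht0', ?_⟩
          rw [dist_to_j h5 h2 t0 u, dist_to_j h5 h2 t0 v, fJ_nonj t0 hu, fJ_nonj t0 hv]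
          omega
        · refine ⟨_, hpmem, ?_⟩
          rw [dist_to_p h5 ho h2 u, dist_to_p h5 ho h2 v]
          exact h
  · -- cardinality
    have hinj : Function.Injective
        (fun t : Fin (n3-1) => GVert.j (n1 := n1) (n2 := n2) (Fin.castLE hle t)) := by
      intro x y hxy
      simp only at hxy
      injection hxy with h
      have hval := congrArg Fin.val h
      simp only [Fin.coe_castLE] at hval
      exact Fin.ext hval
    have hnm : GVert.a (n2 := n2) (n3 := n3) ⟨pIdx n1, hpn⟩ ∉
        ((fun t : Fin (n3-1) => GVert.j (Fin.castLE hle t)) '' Set.univ) := by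
      rintro ⟨t, -, h⟩
      exact absurd h (by simp)
    rw [Set.ncard_insert_of_notMem hnm (Set.finite_univ.image _),
      Set.ncard_image_of_injective _ hinj, Set.ncard_univ]
    simp only [Nat.card_eq_fintype_card, Fintype.card_fin]
    omega

lemma lower_bound (h5 : 5 ≤ n1) (ho : n1 % 2 = 1) (h2 : 1 ≤ n2) (h3 : 2 ≤ n3)
    (S : Set (GVert n1 n2 n3)) (hfin : S.Finite)
    (hgen : IsMetricGenerator (GGraph n1 n2 n3) S) : n3 ≤ S.ncard := by
  classical
  obtain ⟨z, hzS, hzd⟩ := hgen (.a ⟨1, by omega⟩) (.a ⟨n1 - 1, by omega⟩)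
    (by simp [Fin.ext_iff]; omega)
  have hznj : ∀ t, z ≠ GVert.j t := by
    rintro t rfl
    apply hzd
    rw [dist_to_j h5 h2 t _, dist_to_j h5 h2 t _]
    simp only [fJ, fI]
    omega
  have hcompl : ∀ s t : Fin n3, GVert.j s ∉ S → GVert.j t ∉ S → s = t := by
    intro s t hs ht
    by_contra hst
    obtain ⟨z', hz'S, hz'd⟩ := hgen (.j s) (.j t) (by simp [hst])
    have hzs : z' ≠ GVert.j s := fun h => hs (h ▸ hz'S)
    have hzt : z' ≠ GVert.j t := fun h => ht (h ▸ hz'S)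
    apply hz'd
    rw [SimpleGraph.dist_comm (u := GVert.j s), SimpleGraph.dist_comm (u := GVert.j t),
      dist_to_j h5 h2 s z', dist_to_j h5 h2 t z']
    cases z' with
    | j r =>
      have hr1 : ¬ r = s := fun h => hzs (congrArg _ h)
      have hr2 : ¬ r = t := fun h => hzt (congrArg _ h)
      simp [fJ, hr1, hr2]
    | a k => rfl
    | b m => rfl
    | c => rfl
    | i => rfl
  have hjinj : Function.Injective (GVert.j : Fin n3 → GVert n1 n2 n3) := by
    intro x y h
    injection h
  have hTcard : n3 - 1 ≤ {t : Fin n3 | GVert.j t ∈ S}.ncard := by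
    set T := {t : Fin n3 | GVert.j t ∈ S} with hT
    have hco : Tᶜ.ncard ≤ 1 := by
      rcases Set.eq_empty_or_nonempty Tᶜ with he | ⟨t0, ht0⟩
      · simp [he]
      · have hsub2 : Tᶜ ⊆ {t0} := by
          intro t ht
          have h1 : GVert.j t ∉ S := ht
          have h2' : GVert.j t0 ∉ S := ht0
          simp [hcompl t t0 h1 h2']
        calc Tᶜ.ncard ≤ ({t0} : Set (Fin n3)).ncard :=
              Set.ncard_le_ncard hsub2 (Set.finite_singleton _)
          _ = 1 := Set.ncard_singleton _
    have hsum := Set.ncard_add_ncard_compl T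
    have hcardn3 : Nat.card (Fin n3) = n3 := by simp
    omega
  have hTsub : (GVert.j '' {t : Fin n3 | GVert.j t ∈ S}) ∪ {z} ⊆ S := by
    rintro x (⟨t, ht, rfl⟩ | hx)
    · exact ht
    · rw [Set.mem_singleton_iff] at hx
      subst hx
      exact hzS
  have hdisj : Disjoint (GVert.j '' {t : Fin n3 | GVert.j t ∈ S}) ({z} : Set _) := by
    rw [Set.disjoint_singleton_right]
    rintro ⟨t, -, rfl⟩
    exact hznj t rfl
  have hfinal := Set.ncard_le_ncard hTsub hfin
  rw [Set.ncard_union_eq hdisj ((Set.toFinite _).image _) (Set.finite_singleton _),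
    Set.ncard_image_of_injective _ hjinj, Set.ncard_singleton] at hfinal
  omega


/-- Lemma 3 (odd case): if `n1` is odd then `dim(G_{n1,n2,n3}) = n3`. -/
theorem metricDim_GGraph_odd (n1 n2 n3 : ℕ) (h1 : 5 ≤ n1) (hodd : Odd n1)
    (h2 : 1 ≤ n2) (h3 : 2 ≤ n3) :
    metricDim (GGraph n1 n2 n3) = n3 := by
  have ho : n1 % 2 = 1 := Nat.odd_iff.mp hodd
  have hmem : n3 ∈ {n | ∃ S : Set (GVert n1 n2 n3),
      S.Finite ∧ IsMetricGenerator (GGraph n1 n2 n3) S ∧ S.ncard = n} := by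
    obtain ⟨S, hf, hg, hc⟩ := upper_mem h1 ho h2 h3
    exact ⟨S, hf, hg, hc⟩
  refine le_antisymm (Nat.sInf_le hmem) ?_
  refine le_csInf ⟨n3, hmem⟩ ?_
  rintro m ⟨S, hf, hg, rfl⟩
  exact lower_bound h1 ho h2 h3 S hf hg
end
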